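/- arXiv:2507.20932 — 4 statements merged into one kernel-verified Lean document; each statement's English description precedes it below -/
import Mathlib

section
/- Every geometric morphism (f^*, f_*) : Psh(D) → Psh(C) between presheaf topoi on small categories is induced by a flat distributor: namely the distributor H_f(d,c) = (f^* y_C(c))(d) is flat, and its left extension lext_{H_f} is naturally isomorphic to f^*. -/
open CategoryTheory CategoryTheory.Limits Opposite

universe u

namespace DistPaper

variable {B C D : Type u} [SmallCategory B] [SmallCategory C] [SmallCategory D]

/-- A distributor `H : C ⇸ D` is a functor `Dᵒᵖ × C ⥤ Type u`. -/
abbrev Dist (C D : Type u) [SmallCategory C] [SmallCategory D] : Type (u + 1) :=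
  Dᵒᵖ × C ⥤ Type u

/-- Action of a distributor on a pair of morphisms:
`hmap H v u : H(d, c) → H(d', c')` for `v : d' ⟶ d` and `u : c ⟶ c'`. -/
def hmap (H : Dist C D) {d d' : D} {c c' : C} (v : d' ⟶ d) (u : c ⟶ c') :
    H.obj (op d, c) → H.obj (op d', c') :=
  H.map ((v.op, u) : (op d, c) ⟶ (op d', c'))

lemma hmap_hmap (H : Dist C D) {d d' d'' : D} {c c' c'' : C} (v : d' ⟶ d) (v' : d'' ⟶ d')
    (u : c ⟶ c') (u' : c' ⟶ c'') (x : H.obj (op d, c)) :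
    hmap H v' u' (hmap H v u x) = hmap H (v' ≫ v) (u ≫ u') x := by
  dsimp [hmap]
  rw [← FunctorToTypes.map_comp_apply]
  congr 1

lemma hmap_id (H : Dist C D) {d : D} {c : C} (x : H.obj (op d, c)) :
    hmap H (𝟙 d) (𝟙 c) x = x := by
  exact H.map_id_apply (op d, c) x

/-- The classifying functor `Ĥ : C ⥤ Psh(D)`, `c ↦ H(-, c)`. -/
def classify (H : Dist C D) : C ⥤ Dᵒᵖ ⥤ Type u :=
  Functor.curry.obj (CategoryTheory.Prod.swap C Dᵒᵖ ⋙ H)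

/-- The distributor associated to a functor `C ⥤ Psh(D)`. -/
def distOfFunctor (G : C ⥤ Dᵒᵖ ⥤ Type u) : Dist C D :=
  CategoryTheory.Prod.swap Dᵒᵖ C ⋙ Functor.uncurry.obj G

/-- A distributor is flat when all its categories of elements `d ↓ H` are cofiltered. -/
def DistFlat (H : Dist C D) : Prop :=
  ∀ d : D, IsCofiltered ((Functor.curry.obj H).obj (op d)).Elements

/-- The cocontinuous extension `lext_H : Psh(C) ⥤ Psh(D)` of a distributor, obtained as
the left Kan extension of the classifying functor along the Yoneda embedding; pointwise
it is given by the coend `lext_H(X)(d) = ∫^c H(d,c) × X(c)`. -/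
noncomputable def lext (H : Dist C D) : (Cᵒᵖ ⥤ Type u) ⥤ Dᵒᵖ ⥤ Type u :=
  yoneda.leftKanExtension (classify H)

/-- The sieve `x^* H[S]` on `d` obtained from a sieve `S` on `c` and a heteromorphism
`x ∈ H(d, c)`. -/
def pullDist (H : Dist C D) {d : D} {c : C} (x : H.obj (op d, c)) (S : Sieve c) :
    Sieve d where
  arrows d' v := ∃ (c' : C) (u : c' ⟶ c) (x' : H.obj (op d', c')),
    S u ∧ hmap H v (𝟙 c) x = hmap H (𝟙 d') u x'
  downward_closed := by
    rintro d' d'' v ⟨c', u, x', hu, hx⟩ w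
    refine ⟨c', u, hmap H w (𝟙 c') x', hu, ?_⟩
    calc hmap H (w ≫ v) (𝟙 c) x
        = hmap H w (𝟙 c) (hmap H v (𝟙 c) x) := by rw [hmap_hmap]; simp
      _ = hmap H w (𝟙 c) (hmap H (𝟙 d') u x') := by rw [hx]
      _ = hmap H (w ≫ 𝟙 d') (u ≫ 𝟙 c) x' := by rw [hmap_hmap]
      _ = hmap H (𝟙 d'' ≫ w) (𝟙 c' ≫ u) x' := by simp
      _ = hmap H (𝟙 d'') u (hmap H w (𝟙 c') x') := by rw [hmap_hmap]

/-- A distributor is cover-distributing from `J` to `K` if sieves of the form `x^* H[S]`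
with `S` a `J`-covering sieve are `K`-covering. -/
def CoverDistributing (J : GrothendieckTopology C) (K : GrothendieckTopology D)
    (H : Dist C D) : Prop :=
  ∀ ⦃d : D⦄ ⦃c : C⦄ (x : H.obj (op d, c)) (S : Sieve c), S ∈ J c → pullDist H x S ∈ K d

section flatSieves

variable (H : Dist C D)

/-- The sieve of condition (1) of `K`-flatness. -/
def flatSieve₁ (d : D) : Sieve d where
  arrows d' _ := ∃ c : C, Nonempty (H.obj (op d', c))
  downward_closed := by
    rintro d' d'' v ⟨c, ⟨x⟩⟩ w
    exact ⟨c, ⟨hmap H w (𝟙 c) x⟩⟩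

/-- The sieve of condition (2) of `K`-flatness. -/
def flatSieve₂ {d : D} {c c' : C} (x : H.obj (op d, c)) (x' : H.obj (op d, c')) :
    Sieve d where
  arrows d' v := ∃ (c'' : C) (u : c'' ⟶ c) (u' : c'' ⟶ c') (x'' : H.obj (op d', c'')),
    hmap H (𝟙 d') u x'' = hmap H v (𝟙 c) x ∧ hmap H (𝟙 d') u' x'' = hmap H v (𝟙 c') x'
  downward_closed := by
    rintro d' d'' v ⟨c'', u, u', x'', h1, h2⟩ w
    refine ⟨c'', u, u', hmap H w (𝟙 c'') x'', ?_, ?_⟩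
    · calc hmap H (𝟙 d'') u (hmap H w (𝟙 c'') x'')
          = hmap H (𝟙 d'' ≫ w) (𝟙 c'' ≫ u) x'' := by rw [hmap_hmap]
        _ = hmap H (w ≫ 𝟙 d') (u ≫ 𝟙 c) x'' := by simp
        _ = hmap H w (𝟙 c) (hmap H (𝟙 d') u x'') := by rw [hmap_hmap]
        _ = hmap H w (𝟙 c) (hmap H v (𝟙 c) x) := by rw [h1]
        _ = hmap H (w ≫ v) (𝟙 c) x := by rw [hmap_hmap]; simp
    · calc hmap H (𝟙 d'') u' (hmap H w (𝟙 c'') x'')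
          = hmap H (𝟙 d'' ≫ w) (𝟙 c'' ≫ u') x'' := by rw [hmap_hmap]
        _ = hmap H (w ≫ 𝟙 d') (u' ≫ 𝟙 c') x'' := by simp
        _ = hmap H w (𝟙 c') (hmap H (𝟙 d') u' x'') := by rw [hmap_hmap]
        _ = hmap H w (𝟙 c') (hmap H v (𝟙 c') x') := by rw [h2]
        _ = hmap H (w ≫ v) (𝟙 c') x' := by rw [hmap_hmap]; simp

/-- The sieve of condition (3) of `K`-flatness. -/
def flatSieve₃ {d : D} {c c' : C} (u u' : c' ⟶ c) (x : H.obj (op d, c')) :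
    Sieve d where
  arrows d' v := ∃ (c'' : C) (w : c'' ⟶ c') (x' : H.obj (op d', c'')),
    w ≫ u = w ≫ u' ∧ hmap H v (𝟙 c') x = hmap H (𝟙 d') w x'
  downward_closed := by
    rintro d' d'' v ⟨c'', w, x', hw, hx⟩ t
    refine ⟨c'', w, hmap H t (𝟙 c'') x', hw, ?_⟩
    calc hmap H (t ≫ v) (𝟙 c') x
        = hmap H t (𝟙 c') (hmap H v (𝟙 c') x) := by rw [hmap_hmap]; simp
      _ = hmap H t (𝟙 c') (hmap H (𝟙 d') w x') := by rw [hx]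
      _ = hmap H (t ≫ 𝟙 d') (w ≫ 𝟙 c') x' := by rw [hmap_hmap]
      _ = hmap H (𝟙 d'' ≫ t) (𝟙 c'' ≫ w) x' := by simp
      _ = hmap H (𝟙 d'') w (hmap H t (𝟙 c'') x') := by rw [hmap_hmap]

end flatSieves

/-- `K`-flatness of a distributor `H : C ⇸ (D, K)`. -/
structure KFlat (K : GrothendieckTopology D) (H : Dist C D) : Prop where
  nonempty : ∀ d : D, flatSieve₁ H d ∈ K d
  spans : ∀ ⦃d : D⦄ ⦃c c' : C⦄ (x : H.obj (op d, c)) (x' : H.obj (op d, c')),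
    flatSieve₂ H x x' ∈ K d
  equalizes : ∀ ⦃d : D⦄ ⦃c c' : C⦄ (u u' : c' ⟶ c) (x : H.obj (op d, c')),
    hmap H (𝟙 d) u x = hmap H (𝟙 d) u' x → flatSieve₃ H u u' x ∈ K d




section Aux

variable {C : Type u} [SmallCategory C]

/-- Any element of `E.obj P` comes from a representable, when `E` preserves colimits. -/
lemma exists_rep (E : (Cᵒᵖ ⥤ Type u) ⥤ Type u) [PreservesColimitsOfSize.{u, u} E]
    (P : Cᵒᵖ ⥤ Type u) (z : E.obj P) :
    ∃ (c : C) (f : yoneda.obj c ⟶ P) (w : E.obj (yoneda.obj c)), E.map f w = z := by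
  obtain ⟨t, y, hy⟩ := Types.jointly_surjective _
    (isColimitOfPreserves E (Presheaf.isColimitTautologicalCocone P)) z
  exact ⟨t.left, t.hom, y, hy⟩

lemma isCofiltered_elements (E : (Cᵒᵖ ⥤ Type u) ⥤ Type u)
    [PreservesColimitsOfSize.{u, u} E] [PreservesFiniteLimits E] :
    IsCofiltered (yoneda ⋙ E).Elements := by
  haveI : IsCofilteredOrEmpty (yoneda ⋙ E).Elements := by
    constructor
    · intro X Y
      set A := yoneda.obj X.1
      set B := yoneda.obj Y.1
      let i := PreservesLimitPair.iso E A B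
      let q : E.obj A ⨯ E.obj B := (Types.binaryProductIso (E.obj A) (E.obj B)).inv (X.2, Y.2)
      let z : E.obj (A ⨯ B) := i.inv q
      have hcomp : i.hom z = q := i.inv_hom_id_apply q
      have hz1 : E.map Limits.prod.fst z = X.2 := by
        have h1 := ConcreteCategory.congr_hom (prodComparison_fst E A B) z
        rw [← PreservesLimitPair.iso_hom] at h1
        simp only [types_comp_apply] at h1
        rw [← h1, hcomp]
        have h2 := ConcreteCategory.congr_hom (Types.binaryProductIso_inv_comp_fst (E.obj A) (E.obj B)) ((X.2, Y.2) : E.obj A × E.obj B)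
        exact h2
      have hz2 : E.map Limits.prod.snd z = Y.2 := by
        have h1 := ConcreteCategory.congr_hom (prodComparison_snd E A B) z
        rw [← PreservesLimitPair.iso_hom] at h1
        simp only [types_comp_apply] at h1
        rw [← h1, hcomp]
        have h2 := ConcreteCategory.congr_hom (Types.binaryProductIso_inv_comp_snd (E.obj A) (E.obj B)) ((X.2, Y.2) : E.obj A × E.obj B)
        exact h2
      obtain ⟨c, f, w, hw⟩ := exists_rep E (A ⨯ B) z
      refine ⟨⟨c, w⟩, ⟨yoneda.preimage (f ≫ Limits.prod.fst), ?_⟩,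
        ⟨yoneda.preimage (f ≫ Limits.prod.snd), ?_⟩, trivial⟩
      · show E.map (yoneda.map (yoneda.preimage (f ≫ Limits.prod.fst))) w = X.2
        rw [Functor.map_preimage, FunctorToTypes.map_comp_apply, hw, hz1]
      · show E.map (yoneda.map (yoneda.preimage (f ≫ Limits.prod.snd))) w = Y.2
        rw [Functor.map_preimage, FunctorToTypes.map_comp_apply, hw, hz2]
    · intro X Y f g
      set yf := yoneda.map f.1
      set yg := yoneda.map g.1
      have hx : E.map yf X.2 = E.map yg X.2 := f.2.trans g.2.symm
      let z' : equalizer (E.map yf) (E.map yg) :=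
        (Types.equalizerIso (E.map yf) (E.map yg)).inv ⟨X.2, hx⟩
      have hz' : equalizer.ι (E.map yf) (E.map yg) z' = X.2 := by
        have h := ConcreteCategory.congr_hom (Types.equalizerIso_inv_comp_ι (E.map yf) (E.map yg)) ⟨X.2, hx⟩
        exact h
      let z : E.obj (equalizer yf yg) := inv (equalizerComparison yf yg E) z'
      have hz : E.map (equalizer.ι yf yg) z = X.2 := by
        have h := ConcreteCategory.congr_hom (equalizerComparison_comp_π yf yg E) z
        simp only [types_comp_apply] at h
        rw [← h]
        have h2 : equalizerComparison yf yg E (inv (equalizerComparison yf yg E) z') = z' := by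
          have h3 := ConcreteCategory.congr_hom (IsIso.inv_hom_id (equalizerComparison yf yg E)) z'
          simpa only [types_comp_apply, types_id_apply] using h3
        show equalizer.ι (E.map yf) (E.map yg)
          (equalizerComparison yf yg E (inv (equalizerComparison yf yg E) z')) = X.2
        rw [h2]
        exact hz'
      obtain ⟨c, p, w, hw⟩ := exists_rep E (equalizer yf yg) z
      have hww : E.map (yoneda.map (yoneda.preimage (p ≫ equalizer.ι yf yg))) w = X.2 := by
        rw [Functor.map_preimage, FunctorToTypes.map_comp_apply, hw, hz]
      refine ⟨⟨c, w⟩, ⟨yoneda.preimage (p ≫ equalizer.ι yf yg), hww⟩, ?_⟩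
      apply Subtype.ext
      show yoneda.preimage (p ≫ equalizer.ι yf yg) ≫ f.1 =
        yoneda.preimage (p ≫ equalizer.ι yf yg) ≫ g.1
      apply yoneda.map_injective
      simp only [Functor.map_comp, Functor.map_preimage]
      rw [Category.assoc, Category.assoc, equalizer.condition]
  haveI : Nonempty (yoneda ⋙ E).Elements := by
    let z0 : E.obj (⊤_ (Cᵒᵖ ⥤ Type u)) :=
      (PreservesTerminal.iso E).inv (Types.terminalIso.inv PUnit.unit)
    obtain ⟨c, f, w, -⟩ := exists_rep E (⊤_ (Cᵒᵖ ⥤ Type u)) z0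
    exact ⟨⟨c, w⟩⟩
  constructor

/-- Transfer cofilteredness of categories of elements along an isomorphism of functors. -/
lemma isCofiltered_elements_of_iso {F G : C ⥤ Type u} (e : F ≅ G)
    [IsCofiltered F.Elements] : IsCofiltered G.Elements := by
  have equiv : F.Elements ≌ G.Elements := Cat.equivOfIso (Functor.elementsFunctor.mapIso e)
  exact IsCofiltered.of_equivalence equiv

/-- The classifying functor of the distributor of a functor is isomorphic to the functor. -/
noncomputable def classifyDistOfFunctorIso (G : C ⥤ Dᵒᵖ ⥤ Type u) :
    classify (distOfFunctor G) ≅ G :=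
  NatIso.ofComponents (fun c => NatIso.ofComponents (fun d => Iso.refl ((G.obj c).obj d))
      (fun f => by dsimp [classify, distOfFunctor]; simp))
    (fun f => by ext d x; dsimp [classify, distOfFunctor]; simp; rfl)

/-- Pointwise description of the curried distributor of a functor. -/
noncomputable def curryDistOfFunctorIso (G : C ⥤ Dᵒᵖ ⥤ Type u) (d : D) :
    (Functor.curry.obj (distOfFunctor G)).obj (op d) ≅ G ⋙ (evaluation Dᵒᵖ (Type u)).obj (op d) :=
  NatIso.ofComponents (fun c => Iso.refl _)
    (fun f => by dsimp [distOfFunctor]; simp)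

end Aux

/-- Every geometric morphism `Psh(D) → Psh(C)` is induced by a flat distributor: the
distributor `H_f(d, c) = (f^*(y_C c))(d)` is flat and `lext_{H_f} ≅ f^*`. -/
theorem geometricMorphism_induced_by_flat_distributor {C D : Type u} [SmallCategory C]
    [SmallCategory D] (fs : (Cᵒᵖ ⥤ Type u) ⥤ Dᵒᵖ ⥤ Type u)
    (fst : (Dᵒᵖ ⥤ Type u) ⥤ Cᵒᵖ ⥤ Type u) (adj : fs ⊣ fst) [PreservesFiniteLimits fs] :
    DistFlat (distOfFunctor (yoneda ⋙ fs)) ∧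
      Nonempty (lext (distOfFunctor (yoneda ⋙ fs)) ≅ fs) := by
  haveI : PreservesColimitsOfSize.{u, u} fs := adj.leftAdjoint_preservesColimits
  constructor
  · intro d
    let E : (Cᵒᵖ ⥤ Type u) ⥤ Type u := fs ⋙ (evaluation Dᵒᵖ (Type u)).obj (op d)
    haveI : PreservesColimitsOfSize.{u, u} E := by
      dsimp only [E]; infer_instance
    haveI : PreservesFiniteLimits E := by
      haveI : PreservesFiniteLimits ((evaluation Dᵒᵖ (Type u)).obj (op d)) :=
        ⟨fun _ _ _ => inferInstance⟩
      exact Limits.comp_preservesFiniteLimits _ _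
    exact @isCofiltered_elements_of_iso _ _ _ _
      (curryDistOfFunctorIso (yoneda ⋙ fs) d).symm (isCofiltered_elements E)
  · have e0 : classify (distOfFunctor (yoneda ⋙ fs)) ≅ uliftYoneda.{u} ⋙ fs :=
      classifyDistOfFunctorIso (yoneda ⋙ fs) ≪≫
        Functor.isoWhiskerRight uliftYonedaIsoYoneda.{u}.symm fs
    haveI := Presheaf.isLeftKanExtension_of_preservesColimits.{u, u, u, u, u + 1} fs e0
    have e1 : yoneda ⋙ 𝟭 (Cᵒᵖ ⥤ Type u) ≅ uliftYoneda.{u} :=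
      Functor.rightUnitor _ ≪≫ uliftYonedaIsoYoneda.{u}.symm
    haveI := (Functor.isLeftKanExtension_iff_postcomp₁ (𝟭 _) e1 e0.hom).1 inferInstance
    exact ⟨Functor.leftKanExtensionUnique _
      (yoneda.leftKanExtensionUnit (classify (distOfFunctor (yoneda ⋙ fs)))) (𝟭 _ ⋙ fs)
      (e0.hom ≫ Functor.whiskerRight e1.inv _ ≫ (Functor.associator _ _ _).hom)⟩

end DistPaper
end

section
/- A distributor H : C ⇸ D between sites (C,J), (D,K) is cover-distributing from J to K if and only if the composite a_K ∘ Ĥ : C → Sh(D,K) sends J-covering families to epimorphic families in Sh(D,K), where a_K is sheafification and Ĥ(c) = H(−,c). -/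
open CategoryTheory CategoryTheory.Limits Opposite

universe u

namespace DistPaper

variable {B C D : Type u} [SmallCategory B] [SmallCategory C] [SmallCategory D]

section Aux

variable {C D : Type u} [SmallCategory C] [SmallCategory D]

lemma classify_obj_map (H : Dist C D) (c : C) {d d' : D} (v : d' ⟶ d)
    (x : H.obj (op d, c)) :
    ((classify H).obj c).map v.op x = hmap H v (𝟙 c) x := rfl

lemma classify_map_app (H : Dist C D) {c c' : C} (u : c ⟶ c') {d : D}
    (x : H.obj (op d, c)) :
    ((classify H).map u).app (op d) x = hmap H (𝟙 d) u x := rfl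

lemma pullDist_pullback (H : Dist C D) {d d' : D} {c : C} (v : d' ⟶ d)
    (x : H.obj (op d, c)) (S : Sieve c) :
    pullDist H (hmap H v (𝟙 c) x) S = (pullDist H x S).pullback v := by
  ext d'' w
  show (∃ _, _) ↔ (∃ _, _)
  rw [show hmap H w (𝟙 c) (hmap H v (𝟙 c) x) = hmap H (w ≫ v) (𝟙 c) x by
    rw [hmap_hmap]; simp]

lemma pullDist_of_mem (H : Dist C D) {d' : D} {c c' : C} {S : Sieve c} (u : c' ⟶ c)
    (hu : S u) (x'' : H.obj (op d', c')) :
    pullDist H (hmap H (𝟙 d') u x'') S = ⊤ := by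
  ext d'' w
  simp only [Sieve.top_apply, iff_true]
  refine ⟨c', u, hmap H w (𝟙 c') x'', hu, ?_⟩
  calc hmap H w (𝟙 c) (hmap H (𝟙 d') u x'')
      = hmap H (w ≫ 𝟙 d') (u ≫ 𝟙 c) x'' := by rw [hmap_hmap]
    _ = hmap H (𝟙 d'' ≫ w) (𝟙 c' ≫ u) x'' := by simp
    _ = hmap H (𝟙 d'') u (hmap H w (𝟙 c') x'') := by rw [hmap_hmap]

/-- The natural transformation classifying the closures of the pulled-back sieves. -/
def closeNat (K : GrothendieckTopology D) (H : Dist C D) {c : C} (S : Sieve c) :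
    (classify H).obj c ⟶ (Functor.closedSieves K).toFunctor where
  app dop := TypeCat.ofHom fun y => ⟨K.close (pullDist H (show H.obj (op dop.unop, c) from y) S),
    K.close_isClosed _⟩
  naturality := by
    rintro ⟨d⟩ ⟨d'⟩ f
    refine ConcreteCategory.hom_ext _ _ fun y => ?_
    refine Subtype.ext ?_
    show K.close (pullDist H (hmap H f.unop (𝟙 c) y) S)
      = (K.close (pullDist H y S)).pullback f.unop
    exact (congrArg K.close (pullDist_pullback H f.unop y S)).trans (K.pullback_close _ _)

/-- The natural transformation constant at the maximal closed sieve. -/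
def topNat (K : GrothendieckTopology D) (H : Dist C D) (c : C) :
    (classify H).obj c ⟶ (Functor.closedSieves K).toFunctor where
  app dop := TypeCat.ofHom fun _ => ⟨(⊤ : Sieve dop.unop), fun _ _ _ => trivial⟩
  naturality := by
    rintro ⟨d⟩ ⟨d'⟩ f
    refine ConcreteCategory.hom_ext _ _ fun y => ?_
    refine Subtype.ext ?_
    show (⊤ : Sieve d') = Sieve.pullback f.unop ⊤
    exact Sieve.pullback_top.symm

end Aux

/-- A distributor `H : C ⇸ D` is cover-distributing from `J` to `K` iff `a_K ∘ Ĥ` sends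
`J`-covering families to (jointly) epimorphic families in `Sh(D, K)`. -/
theorem coverDistributing_iff_sends_covers_to_epimorphic_families {C D : Type u}
    [SmallCategory C] [SmallCategory D] (J : GrothendieckTopology C)
    (K : GrothendieckTopology D) (H : Dist C D) :
    CoverDistributing J K H ↔
      ∀ ⦃c : C⦄ (S : Sieve c), S ∈ J c →
        ∀ (Z : Sheaf K (Type u))
          (g h : (classify H ⋙ presheafToSheaf K (Type u)).obj c ⟶ Z),
          (∀ ⦃c' : C⦄ (u : c' ⟶ c), S u →
            (classify H ⋙ presheafToSheaf K (Type u)).map u ≫ g =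
              (classify H ⋙ presheafToSheaf K (Type u)).map u ≫ h) → g = h := by
  have adj := sheafificationAdjunction K (Type u)
  constructor
  · -- cover-distributing ⇒ epimorphic families
    intro hCD c S hS Z g h hyp
    apply (adj.homEquiv ((classify H).obj c) Z).injective
    set g' := (adj.homEquiv _ Z) g with hg'
    set h' := (adj.homEquiv _ Z) h with hh'
    have key : ∀ ⦃c' : C⦄ (u : c' ⟶ c), S u →
        (classify H).map u ≫ g' = (classify H).map u ≫ h' := by
      intro c' u hu
      rw [hg', hh', ← adj.homEquiv_naturality_left, ← adj.homEquiv_naturality_left]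
      exact congrArg _ (hyp u hu)
    have hZ := (isSheaf_iff_isSheaf_of_type K Z.val).mp Z.cond
    apply NatTrans.ext
    funext dop
    refine ConcreteCategory.hom_ext _ _ fun x => ?_
    obtain ⟨d⟩ := dop
    refine ((hZ _ (hCD x S hS)).isSeparatedFor).ext ?_
    intro d' v hv
    obtain ⟨c', u, x', hu, hx⟩ := hv
    have ng : Z.val.map v.op (g'.app (op d) x)
        = g'.app (op d') (((classify H).obj c).map v.op x) :=
      (NatTrans.naturality_apply g' v.op x).symm
    have nh : Z.val.map v.op (h'.app (op d) x)
        = h'.app (op d') (((classify H).obj c).map v.op x) :=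
      (NatTrans.naturality_apply h' v.op x).symm
    rw [ng, nh, show ((classify H).obj c).map v.op x = ((classify H).map u).app (op d') x' from
      (classify_obj_map H c v x).trans (hx.trans (classify_map_app H u x').symm)]
    exact ConcreteCategory.congr_hom (congrFun (congrArg NatTrans.app (key u hu)) (op d')) x'
  · -- epimorphic families ⇒ cover-distributing
    intro hEp d c x S hS
    let Z : Sheaf K (Type u) :=
      ⟨(Functor.closedSieves K).toFunctor,
        (isSheaf_iff_isSheaf_of_type K _).mpr (classifier_isSheaf K)⟩
    let g' : (classify H).obj c ⟶ Z.val := closeNat K H S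
    let h' : (classify H).obj c ⟶ Z.val := topNat K H c
    have hcomp : ∀ ⦃c' : C⦄ (u : c' ⟶ c), S u →
        (classify H).map u ≫ g' = (classify H).map u ≫ h' := by
      intro c' u hu
      apply NatTrans.ext
      funext dop
      refine ConcreteCategory.hom_ext _ _ fun x'' => ?_
      obtain ⟨d'⟩ := dop
      refine Subtype.ext ?_
      simp only [NatTrans.comp_app, types_comp_apply]
      show K.close (pullDist H (hmap H (𝟙 d') u x'') S) = ⊤
      rw [show pullDist H (hmap H (𝟙 d') u x'') S = ⊤ from pullDist_of_mem H u hu x'',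
        K.close_eq_top_iff_mem]
      exact K.top_mem d'
    have hgh : (adj.homEquiv _ Z).symm g' = (adj.homEquiv _ Z).symm h' := by
      apply hEp S hS Z
      intro c' u hu
      apply (adj.homEquiv ((classify H).obj c') Z).injective
      rw [show (classify H ⋙ presheafToSheaf K (Type u)).map u
          = (presheafToSheaf K (Type u)).map ((classify H).map u) from rfl,
        adj.homEquiv_naturality_left, adj.homEquiv_naturality_left,
        Equiv.apply_symm_apply, Equiv.apply_symm_apply]
      exact hcomp u hu
    have : g' = h' := (adj.homEquiv _ Z).symm.injective hgh
    have := ConcreteCategory.congr_hom (congrFun (congrArg NatTrans.app this) (op d)) x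
    have hclose : K.close (pullDist H x S) = ⊤ := congrArg Subtype.val this
    rwa [K.close_eq_top_iff_mem] at hclose

end DistPaper
end

section
/- If H : (C,J) ⇸ (D,K) is a distributor of sites (K-flat and cover-distributing from J to K), then the composite a_K ∘ lext_H : Psh(C) → Sh(D,K) inverts J-local isomorphisms, hence factorizes through the sheafification a_J : Psh(C) → Sh(C,J), yielding the inverse image of a geometric morphism Sh(D,K) → Sh(C,J). -/
open CategoryTheory CategoryTheory.Limits Opposite

universe u

namespace DistPaper

variable {B C D : Type u} [SmallCategory B] [SmallCategory C] [SmallCategory D]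

/-! ### Auxiliary development: explicit coend model of `lext` -/

section Aux

variable {C D : Type u} [SmallCategory C] [SmallCategory D]

section HmapLemmas

variable (H : Dist C D)

lemma hmap_ll {d d' d'' : D} {c : C} (v : d' ⟶ d) (v' : d'' ⟶ d') (x : H.obj (op d, c)) :
    hmap H v' (𝟙 c) (hmap H v (𝟙 c) x) = hmap H (v' ≫ v) (𝟙 c) x := by
  rw [hmap_hmap]; simp

lemma hmap_rr {d : D} {c c' c'' : C} (u : c ⟶ c') (u' : c' ⟶ c'') (x : H.obj (op d, c)) :
    hmap H (𝟙 d) u' (hmap H (𝟙 d) u x) = hmap H (𝟙 d) (u ≫ u') x := by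
  rw [hmap_hmap]; simp

lemma hmap_lr {d d' : D} {c c' : C} (v : d' ⟶ d) (u : c ⟶ c') (x : H.obj (op d, c)) :
    hmap H (𝟙 d') u (hmap H v (𝟙 c) x) = hmap H v (𝟙 c') (hmap H (𝟙 d) u x) := by
  rw [hmap_hmap, hmap_hmap]; simp

end HmapLemmas

variable (H : Dist C D)

/-- Elements of the pointwise coend `∫^c H(d,c) × X(c)`. -/
structure Elt (X : Cᵒᵖ ⥤ Type u) (d : D) : Type u where
  c : C
  h : H.obj (op d, c)
  x : X.obj (op c)

/-- The coend relation. -/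
inductive CoendRel (X : Cᵒᵖ ⥤ Type u) (d : D) : Elt H X d → Elt H X d → Prop
  | mk {c c' : C} (u : c' ⟶ c) (h : H.obj (op d, c')) (x : X.obj (op c)) :
      CoendRel X d ⟨c, hmap H (𝟙 d) u h, x⟩ ⟨c', h, X.map u.op x⟩

/-- The pointwise coend. -/
def L0obj (X : Cᵒᵖ ⥤ Type u) (d : D) : Type u := Quot (CoendRel H X d)

/-- Class of an element in the coend. -/
def mkL {X : Cᵒᵖ ⥤ Type u} {d : D} (e : Elt H X d) : L0obj H X d := Quot.mk _ e

/-- Restriction of elements. -/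
def resElt {X : Cᵒᵖ ⥤ Type u} {d d' : D} (v : d' ⟶ d) (e : Elt H X d) : Elt H X d' :=
  ⟨e.c, hmap H v (𝟙 e.c) e.h, e.x⟩

lemma res_rel {X : Cᵒᵖ ⥤ Type u} {d d' : D} (v : d' ⟶ d) {a b : Elt H X d}
    (hab : CoendRel H X d a b) : mkL H (resElt H v a) = mkL H (resElt H v b) := by
  obtain ⟨u, h, x⟩ := hab
  dsimp [resElt]
  rw [← hmap_lr]
  exact Quot.sound (CoendRel.mk u (hmap H v (𝟙 _) h) x)

/-- Restriction map of the coend. -/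
def resQ {X : Cᵒᵖ ⥤ Type u} {d d' : D} (v : d' ⟶ d) : L0obj H X d → L0obj H X d' :=
  Quot.lift (fun e => mkL H (resElt H v e)) (fun _ _ hab => res_rel H v hab)

/-- The explicit cocontinuous extension of `H` given by pointwise coends. -/
def L0 : (Cᵒᵖ ⥤ Type u) ⥤ Dᵒᵖ ⥤ Type u where
  obj X :=
    { obj := fun d => L0obj H X d.unop
      map := fun v => ↾(resQ H v.unop)
      map_id := fun d => by
        ext s
        induction s using Quot.ind with
        | _ e => exact congrArg (mkL H) (by cases e; simp [resElt, hmap_id])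
      map_comp := fun {d₁ d₂ d₃} φ φ' => by
        ext s
        induction s using Quot.ind with
        | _ e => exact congrArg (mkL H) (by cases e; simp [resElt, hmap_ll]) }
  map {X Y} g :=
    { app := fun d => ↾Quot.lift (fun e => mkL H ⟨e.c, e.h, g.app (op e.c) e.x⟩)
        (by
          rintro a b ⟨u, h, x⟩
          dsimp only
          rw [show g.app _ (X.map u.op x) = Y.map u.op (g.app _ x) from
            NatTrans.naturality_apply g u.op x]
          exact Quot.sound (CoendRel.mk u h (g.app _ x)))
      naturality := fun d d' φ => by
        ext s
        induction s using Quot.ind with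
        | _ e => rfl }
  map_id X := by
    apply NatTrans.ext; ext d s
    induction s using Quot.ind with
    | _ e => rfl
  map_comp f g := by
    apply NatTrans.ext; ext d s
    induction s using Quot.ind with
    | _ e => rfl

end Aux
section Sieves

variable {C D : Type u} [SmallCategory C] [SmallCategory D] (H : Dist C D)

/-- The sieve witnessing that two coend elements are locally connected by a single span. -/
def relSieve (X : Cᵒᵖ ⥤ Type u) {d : D} (a b : Elt H X d) : Sieve d where
  arrows d' v := ∃ (c'' : C) (u : c'' ⟶ a.c) (u' : c'' ⟶ b.c) (h'' : H.obj (op d', c'')),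
    hmap H (𝟙 d') u h'' = hmap H v (𝟙 a.c) a.h ∧
    hmap H (𝟙 d') u' h'' = hmap H v (𝟙 b.c) b.h ∧
    X.map u.op a.x = X.map u'.op b.x
  downward_closed := by
    rintro d' d'' v ⟨c'', u, u', h'', e1, e2, e3⟩ w
    refine ⟨c'', u, u', hmap H w (𝟙 _) h'', ?_, ?_, e3⟩
    · rw [hmap_lr, e1, hmap_ll]
    · rw [hmap_lr, e2, hmap_ll]

/-- The sieve of local solutions to a span-equalization problem. -/
def spanSieve {d : D} {c₁ c₂ c₀ : C} (p : c₁ ⟶ c₀) (q : c₂ ⟶ c₀)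
    (h₁ : H.obj (op d, c₁)) (h₂ : H.obj (op d, c₂)) : Sieve d where
  arrows d' v := ∃ (c₅ : C) (w : c₅ ⟶ c₁) (w' : c₅ ⟶ c₂) (h₅ : H.obj (op d', c₅)),
    w ≫ p = w' ≫ q ∧
    hmap H (𝟙 d') w h₅ = hmap H v (𝟙 c₁) h₁ ∧
    hmap H (𝟙 d') w' h₅ = hmap H v (𝟙 c₂) h₂
  downward_closed := by
    rintro d' d'' v ⟨c₅, w, w', h₅, hw, e1, e2⟩ t
    refine ⟨c₅, w, w', hmap H t (𝟙 _) h₅, hw, ?_, ?_⟩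
    · rw [hmap_lr, e1, hmap_ll]
    · rw [hmap_lr, e2, hmap_ll]

variable (K : GrothendieckTopology D)

lemma spanSieve_mem (hfl : KFlat K H) {d : D} {c₁ c₂ c₀ : C} (p : c₁ ⟶ c₀) (q : c₂ ⟶ c₀)
    (h₁ : H.obj (op d, c₁)) (h₂ : H.obj (op d, c₂))
    (hpq : hmap H (𝟙 d) p h₁ = hmap H (𝟙 d) q h₂) : spanSieve H p q h₁ h₂ ∈ K d := by
  refine K.transitive (hfl.spans h₁ h₂) _ ?_
  rintro d' v ⟨c₃, w₁, w₂, h₃, e1, e2⟩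
  have heq : hmap H (𝟙 d') (w₁ ≫ p) h₃ = hmap H (𝟙 d') (w₂ ≫ q) h₃ := by
    rw [← hmap_rr, ← hmap_rr, e1, e2, hmap_lr, hmap_lr, hpq]
  refine K.superset_covering ?_ (hfl.equalizes _ _ _ heq)
  rintro d'' v' ⟨c₄, t, h₄, ht, hh⟩
  refine ⟨c₄, t ≫ w₁, t ≫ w₂, h₄, ?_, ?_, ?_⟩
  · simpa [Category.assoc] using ht
  · rw [← hmap_rr, ← hh, hmap_lr, e1, hmap_ll]
  · rw [← hmap_rr, ← hh, hmap_lr, e2, hmap_ll]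

lemma relSieve_mem_of_eq (hfl : KFlat K H) {X : Cᵒᵖ ⥤ Type u} {d : D} {a b : Elt H X d}
    (hab : mkL H a = mkL H b) : relSieve H X a b ∈ K d := by
  have h := Quot.eq.1 hab
  clear hab
  induction h with
  | rel a b hr =>
    obtain ⟨u, h, x⟩ := hr
    refine K.superset_covering ?_ (K.top_mem d)
    intro d' v _
    refine ⟨_, u, 𝟙 _, hmap H v (𝟙 _) h, ?_, ?_, ?_⟩
    · rw [hmap_lr]
    · rw [hmap_id]
    · simp
  | refl a =>
    refine K.superset_covering ?_ (hfl.spans a.h a.h)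
    rintro d' v ⟨c'', u, u', h'', e1, e2⟩
    exact ⟨c'', u, u, h'', e1, e1, rfl⟩
  | symm a b hr hmem =>
    refine K.superset_covering ?_ hmem
    rintro d' v ⟨c'', u, u', h'', e1, e2, e3⟩
    exact ⟨c'', u', u, h'', e2, e1, e3.symm⟩
  | trans a b c hab' hbc' ih₁ ih₂ =>
    refine K.transitive (K.intersection_covering ih₁ ih₂) _ ?_
    rintro d' v ⟨⟨c₁, u₁, u₁', h₁, a1, a2, a3⟩, ⟨c₂, u₂, u₂', h₂, b1, b2, b3⟩⟩
    refine K.superset_covering ?_ (spanSieve_mem H K hfl u₁' u₂ h₁ h₂ (a2.trans b1.symm))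
    rintro d'' v' ⟨c₅, w, w', h₅, hww, e1, e2⟩
    refine ⟨c₅, w ≫ u₁, w' ≫ u₂', h₅, ?_, ?_, ?_⟩
    · rw [← hmap_rr, e1, hmap_lr, a1, hmap_ll]
    · rw [← hmap_rr, e2, hmap_lr, b2, hmap_ll]
    · rw [op_comp, FunctorToTypes.map_comp_apply, a3,
        ← FunctorToTypes.map_comp_apply, ← op_comp, hww,
        op_comp, FunctorToTypes.map_comp_apply, b3,
        ← FunctorToTypes.map_comp_apply, ← op_comp]

lemma resQ_eq_of_relSieve {X : Cᵒᵖ ⥤ Type u} {d : D} {a b : Elt H X d} {d' : D} {v : d' ⟶ d}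
    (hv : (relSieve H X a b) v) : resQ H v (mkL H a) = resQ H v (mkL H b) := by
  obtain ⟨c'', u, u', h'', e1, e2, e3⟩ := hv
  have ha : resQ H v (mkL H a) = mkL H ⟨c'', h'', X.map u.op a.x⟩ := by
    show mkL H (resElt H v a) = _
    have : resElt H v a = ⟨a.c, hmap H (𝟙 d') u h'', a.x⟩ := by
      simp [resElt, e1]
    rw [this]
    exact Quot.sound (CoendRel.mk u h'' a.x)
  have hb : resQ H v (mkL H b) = mkL H ⟨c'', h'', X.map u'.op b.x⟩ := by
    show mkL H (resElt H v b) = _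
    have : resElt H v b = ⟨b.c, hmap H (𝟙 d') u' h'', b.x⟩ := by
      simp [resElt, e2]
    rw [this]
    exact Quot.sound (CoendRel.mk u' h'' b.x)
  rw [ha, hb, e3]

lemma equalizerSieve_mem_of_relSieve {X : Cᵒᵖ ⥤ Type u} {d : D} {a b : Elt H X d}
    (h : relSieve H X a b ∈ K d) :
    Presheaf.equalizerSieve (F := (L0 H).obj X) (X := op d) (mkL H a) (mkL H b) ∈ K d := by
  refine K.superset_covering ?_ h
  intro d' v hv
  exact resQ_eq_of_relSieve H hv

end Sieves
section WMap

variable {C D : Type u} [SmallCategory C] [SmallCategory D] (H : Dist C D)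
variable (J : GrothendieckTopology C) (K : GrothendieckTopology D)

lemma isLocallySurjective_L0_map (hcd : CoverDistributing J K H)
    {X Y : Cᵒᵖ ⥤ Type u} (g : X ⟶ Y) [Presheaf.IsLocallySurjective J g] :
    Presheaf.IsLocallySurjective K ((L0 H).map g) := by
  constructor
  intro d s
  induction s using Quot.ind with
  | _ e =>
    refine K.superset_covering ?_ (hcd e.h _ (Presheaf.imageSieve_mem J g e.x))
    rintro d' v ⟨c', u, h', hu, hh⟩
    obtain ⟨x', hx'⟩ := hu
    refine ⟨mkL H ⟨c', h', x'⟩, ?_⟩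
    show mkL H ⟨c', h', g.app _ x'⟩ = mkL H (resElt H v e)
    have step1 : mkL H ⟨c', h', g.app (op c') x'⟩ = mkL H ⟨c', h', Y.map u.op e.x⟩ :=
      congrArg (fun z => mkL H ⟨c', h', z⟩) hx'
    have step2 : resElt H v e = ⟨e.c, hmap H (𝟙 d') u h', e.x⟩ := by simp [resElt, hh]
    rw [step2]
    exact step1.trans (Quot.sound (CoendRel.mk u h' e.x)).symm

lemma isLocallyInjective_L0_map (hfl : KFlat K H) (hcd : CoverDistributing J K H)
    {X Y : Cᵒᵖ ⥤ Type u} (g : X ⟶ Y) [Presheaf.IsLocallyInjective J g] :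
    Presheaf.IsLocallyInjective K ((L0 H).map g) := by
  constructor
  intro dop s t hst
  induction s using Quot.ind with
  | _ a =>
  induction t using Quot.ind with
  | _ b =>
  have h1 : relSieve H Y ⟨a.c, a.h, g.app (op a.c) a.x⟩ ⟨b.c, b.h, g.app (op b.c) b.x⟩
      ∈ K dop.unop := relSieve_mem_of_eq H K hfl hst
  refine K.transitive h1 _ ?_
  rintro d' v ⟨c'', u, u', h'', e1, e2, e3⟩
  have e3' : g.app (op c'') (X.map u.op a.x) = g.app (op c'') (X.map u'.op b.x) := by
    rw [FunctorToTypes.naturality, FunctorToTypes.naturality]; exact e3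
  have hT : Presheaf.equalizerSieve (X.map u.op a.x) (X.map u'.op b.x) ∈ J c'' :=
    Presheaf.equalizerSieve_mem J g _ _ e3'
  refine K.superset_covering ?_ (hcd h'' _ hT)
  rintro d'' w ⟨c₃, tt, h₃, ht, hw⟩
  show ((L0 H).obj X).map (w ≫ v).op (mkL H a) = ((L0 H).obj X).map (w ≫ v).op (mkL H b)
  have harr : (relSieve H X a b).arrows (w ≫ v) := by
    refine ⟨c₃, tt ≫ u, tt ≫ u', h₃, ?_, ?_, ?_⟩
    · show hmap H (𝟙 d'') (tt ≫ u) h₃ = hmap H (w ≫ v) (𝟙 a.c) a.h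
      rw [← hmap_rr, ← hw, hmap_lr,
        show hmap H (𝟙 d') u h'' = hmap H v (𝟙 a.c) a.h from e1, hmap_ll]
    · show hmap H (𝟙 d'') (tt ≫ u') h₃ = hmap H (w ≫ v) (𝟙 b.c) b.h
      rw [← hmap_rr, ← hw, hmap_lr,
        show hmap H (𝟙 d') u' h'' = hmap H v (𝟙 b.c) b.h from e2, hmap_ll]
    · show X.map (tt ≫ u).op a.x = X.map (tt ≫ u').op b.x
      rw [op_comp, FunctorToTypes.map_comp_apply, op_comp, FunctorToTypes.map_comp_apply]
      exact ht
  exact resQ_eq_of_relSieve H harr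

lemma W_L0_map (hfl : KFlat K H) (hcd : CoverDistributing J K H)
    {X Y : Cᵒᵖ ⥤ Type u} (g : X ⟶ Y) (hg : J.W g) : K.W ((L0 H).map g) := by
  have h1 : Presheaf.IsLocallyInjective J g := hg.isLocallyInjective
  have h2 : Presheaf.IsLocallySurjective J g := hg.isLocallySurjective
  rw [K.W_iff_isLocallyBijective]
  exact ⟨isLocallyInjective_L0_map H J K hfl hcd g, isLocallySurjective_L0_map H J K hcd g⟩

end WMap
section Kan

variable {C D : Type u} [SmallCategory C] [SmallCategory D] (H : Dist C D)

lemma mapAppComp (M : (Cᵒᵖ ⥤ Type u) ⥤ Dᵒᵖ ⥤ Type u) {P Q R : Cᵒᵖ ⥤ Type u}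
    (f : P ⟶ Q) (g : Q ⟶ R) (d : Dᵒᵖ) (z : (M.obj P).obj d) :
    (M.map (f ≫ g)).app d z = (M.map g).app d ((M.map f).app d z) := by
  rw [M.map_comp]; rfl

/-- The unit exhibiting `L0 H` as an extension of `classify H` along yoneda. -/
def L0unit : classify H ⟶ yoneda ⋙ L0 H where
  app c :=
    { app := fun _ => ↾fun h => mkL H ⟨c, h, 𝟙 c⟩
      naturality := fun _ _ _ => rfl }
  naturality := fun c c' f => by
    apply NatTrans.ext
    ext dop h
    have step : mkL H (⟨c', hmap H (𝟙 dop.unop) f h, 𝟙 c'⟩ : Elt H (yoneda.obj c') dop.unop)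
        = mkL H ⟨c, h, (yoneda.obj c').map f.op (𝟙 c')⟩ :=
      Quot.sound (CoendRel.mk (X := yoneda.obj c') f h (𝟙 c'))
    refine Eq.trans ?_ (step.trans ?_)
    · rfl
    · exact congrArg (fun z => mkL H (⟨c, h, z⟩ : Elt H (yoneda.obj c') dop.unop)) (by simp)

variable {H}

/-- Descend a transformation out of the unit through `L0 H`. -/
def descHom {M : (Cᵒᵖ ⥤ Type u) ⥤ Dᵒᵖ ⥤ Type u} (β : classify H ⟶ yoneda ⋙ M) :
    L0 H ⟶ M where
  app X :=
    { app := fun dop => ↾Quot.lift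
        (fun e => (M.map (yonedaEquiv.symm e.x)).app dop ((β.app e.c).app dop e.h))
        (by
          rintro a b ⟨u, h, x⟩
          dsimp only
          rw [show (β.app _).app dop (hmap H (𝟙 dop.unop) u h)
              = (M.map (yoneda.map u)).app dop ((β.app _).app dop h) from
            ConcreteCategory.congr_hom (NatTrans.congr_app (β.naturality u) dop) h]
          exact ((mapAppComp M (yoneda.map u) (yonedaEquiv.symm x) dop
              ((β.app _).app dop h)).symm).trans
            (congrArg (fun t => (M.map t).app dop ((β.app _).app dop h))
              (yonedaEquiv_symm_naturality_left u X x)))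
      naturality := fun dop dop' φ => by
        ext s
        induction s using Quot.ind with
        | _ e =>
          exact (congrArg ((M.map (yonedaEquiv.symm e.x)).app dop')
              (NatTrans.naturality_apply (β.app e.c) φ e.h)).trans
            (NatTrans.naturality_apply (M.map (yonedaEquiv.symm e.x)) φ _) }
  naturality := fun X Y g => by
    apply NatTrans.ext
    ext dop s
    induction s using Quot.ind with
    | _ e =>
      show (M.map (yonedaEquiv.symm (g.app (op e.c) e.x))).app dop ((β.app e.c).app dop e.h)
        = (M.map g).app dop ((M.map (yonedaEquiv.symm e.x)).app dop ((β.app e.c).app dop e.h))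
      rw [← yonedaEquiv_symm_naturality_right]
      exact mapAppComp M _ g dop _

lemma descHom_fac {M : (Cᵒᵖ ⥤ Type u) ⥤ Dᵒᵖ ⥤ Type u} (β : classify H ⟶ yoneda ⋙ M) :
    L0unit H ≫ Functor.whiskerLeft yoneda (descHom β) = β := by
  apply NatTrans.ext
  funext c
  apply NatTrans.ext
  ext dop h
  show (M.map (yonedaEquiv.symm (𝟙 c))).app dop ((β.app c).app dop h) = (β.app c).app dop h
  have h0 : (yonedaEquiv.symm (𝟙 c) : yoneda.obj c ⟶ yoneda.obj c) = 𝟙 _ := by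
    apply yonedaEquiv.injective
    rw [Equiv.apply_symm_apply, yonedaEquiv_apply]
    simp
  rw [h0, M.map_id]
  rfl

lemma descHom_uniq {M : (Cᵒᵖ ⥤ Type u) ⥤ Dᵒᵖ ⥤ Type u} (β : classify H ⟶ yoneda ⋙ M)
    (σ : L0 H ⟶ M) (hσ : L0unit H ≫ Functor.whiskerLeft yoneda σ = β) : σ = descHom β := by
  apply NatTrans.ext
  funext X
  apply NatTrans.ext
  ext dop s
  induction s using Quot.ind with
  | _ e =>
    have h1 : ((L0 H).map (yonedaEquiv.symm e.x)).app dop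
          (mkL H (⟨e.c, e.h, 𝟙 e.c⟩ : Elt H (yoneda.obj e.c) dop.unop))
        = mkL H e := by
      have hx : (yonedaEquiv.symm e.x).app (op e.c) (𝟙 e.c) = e.x := by
        rw [← yonedaEquiv_apply, Equiv.apply_symm_apply]
      exact congrArg (fun z => mkL H (⟨e.c, e.h, z⟩ : Elt H X dop.unop)) hx
    have h2 := ConcreteCategory.congr_hom (NatTrans.congr_app (σ.naturality (yonedaEquiv.symm e.x)) dop)
      (mkL H (⟨e.c, e.h, 𝟙 e.c⟩ : Elt H (yoneda.obj e.c) dop.unop))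
    have h3 : (σ.app (yoneda.obj e.c)).app dop
          (mkL H (⟨e.c, e.h, 𝟙 e.c⟩ : Elt H (yoneda.obj e.c) dop.unop))
        = (β.app e.c).app dop e.h := by
      rw [← hσ]; rfl
    calc (σ.app X).app dop (mkL H e)
        = (σ.app X).app dop (((L0 H).map (yonedaEquiv.symm e.x)).app dop
            (mkL H ⟨e.c, e.h, 𝟙 e.c⟩)) := by rw [h1]
      _ = (M.map (yonedaEquiv.symm e.x)).app dop
            ((σ.app (yoneda.obj e.c)).app dop (mkL H ⟨e.c, e.h, 𝟙 e.c⟩)) := h2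
      _ = (M.map (yonedaEquiv.symm e.x)).app dop ((β.app e.c).app dop e.h) := by rw [h3]

variable (H)

/-- `L0 H` is a left Kan extension of `classify H` along yoneda. -/
noncomputable def L0IsUniversal :
    (Functor.LeftExtension.mk (L0 H) (L0unit H)).IsUniversal :=
  IsInitial.ofUniqueHom
    (fun E => StructuredArrow.homMk (descHom E.hom) (descHom_fac E.hom))
    (fun E m => StructuredArrow.hom_ext _ _
      (descHom_uniq E.hom m.right (StructuredArrow.w m)))

instance : (L0 H).IsLeftKanExtension (L0unit H) := ⟨⟨L0IsUniversal H⟩⟩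

instance : (lext H).IsLeftKanExtension (yoneda.leftKanExtensionUnit (classify H)) :=
  inferInstanceAs ((yoneda.leftKanExtension (classify H)).IsLeftKanExtension _)

/-- The canonical identification of `lext H` with the explicit coend model. -/
noncomputable def lextIsoL0 : lext H ≅ L0 H :=
  Functor.leftKanExtensionUnique _ (yoneda.leftKanExtensionUnit (classify H)) _ (L0unit H)

lemma W_lext_map (J : GrothendieckTopology C) (K : GrothendieckTopology D)
    (hfl : KFlat K H) (hcd : CoverDistributing J K H)
    {X Y : Cᵒᵖ ⥤ Type u} (g : X ⟶ Y) (hg : J.W g) : K.W ((lext H).map g) := by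
  have h0 := W_L0_map H J K hfl hcd g hg
  rw [K.W_iff] at h0 ⊢
  exact (NatIso.isIso_map_iff
    (Functor.isoWhiskerRight (lextIsoL0 H) (presheafToSheaf K (Type u))) g).2 h0

/-- The unit of `lext H` transported along `uliftYoneda ≅ yoneda`. -/
noncomputable def lextUnitU : classify H ⟶ uliftYoneda.{u} ⋙ lext H :=
  yoneda.leftKanExtensionUnit (classify H) ≫
    Functor.whiskerRight uliftYonedaIsoYoneda.{u}.inv (lext H)

instance : (lext H).IsLeftKanExtension (lextUnitU H) := by
  let e := Functor.leftExtensionEquivalenceOfIso₁ uliftYonedaIsoYoneda.{u}.symm (classify H)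
  have : PreservesColimitsOfSize.{0, 0} e.functor := e.toAdjunction.leftAdjoint_preservesColimits
  have : PreservesColimit (Functor.empty.{0} _) e.functor := inferInstance
  exact ⟨⟨IsInitial.isInitialObj e.functor _
    (Functor.isUniversalOfIsLeftKanExtension (lext H)
      (yoneda.leftKanExtensionUnit (classify H)))⟩⟩

end Kan
section Cones

open CategoryTheory.Limits

variable {A : Type u} [Category.{u} A]

/-- The constant singleton presheaf. -/
def unitP (A : Type u) [Category.{u} A] : A ⥤ Type u := (Functor.const A).obj PUnit

/-- Limit cone over an empty diagram. -/
def emptyCone (G : Discrete PEmpty.{1} ⥤ (A ⥤ Type u)) : Cone G where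
  pt := unitP A
  π := { app := fun j => j.as.elim
         naturality := fun j => j.as.elim }

def emptyIsLimit (G : Discrete PEmpty.{1} ⥤ (A ⥤ Type u)) : IsLimit (emptyCone G) where
  lift s := { app := fun _ => ↾fun _ => PUnit.unit, naturality := fun _ _ _ => rfl }
  fac s j := j.as.elim
  uniq s m h := by
    apply NatTrans.ext; ext a q; rfl

/-- Pointwise binary product of presheaves. -/
def prodP (X Y : A ⥤ Type u) : A ⥤ Type u where
  obj a := X.obj a × Y.obj a
  map f := ↾fun p => (X.map f p.1, Y.map f p.2)
  map_id a := by ext p <;> simp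
  map_comp f g := by ext p <;> simp

def prodFst (X Y : A ⥤ Type u) : prodP X Y ⟶ X :=
  { app := fun a => ↾fun p => p.1, naturality := fun _ _ _ => rfl }

def prodSnd (X Y : A ⥤ Type u) : prodP X Y ⟶ Y :=
  { app := fun a => ↾fun p => p.2, naturality := fun _ _ _ => rfl }

/-- Limit cone over a binary-pair diagram. -/
def pairCone (G : Discrete WalkingPair ⥤ (A ⥤ Type u)) : Cone G where
  pt := prodP (G.obj ⟨WalkingPair.left⟩) (G.obj ⟨WalkingPair.right⟩)
  π := Discrete.natTrans (fun j => match j with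
        | ⟨WalkingPair.left⟩ => prodFst _ _
        | ⟨WalkingPair.right⟩ => prodSnd _ _)

def pairIsLimit (G : Discrete WalkingPair ⥤ (A ⥤ Type u)) : IsLimit (pairCone G) where
  lift s :=
    { app := fun a => ↾fun q => ((s.π.app ⟨WalkingPair.left⟩).app a q,
        (s.π.app ⟨WalkingPair.right⟩).app a q)
      naturality := fun a a' f => by
        apply ConcreteCategory.hom_ext; intro q
        show ((s.π.app ⟨WalkingPair.left⟩).app a' (s.pt.map f q),
            (s.π.app ⟨WalkingPair.right⟩).app a' (s.pt.map f q)) =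
          ((G.obj ⟨WalkingPair.left⟩).map f ((s.π.app ⟨WalkingPair.left⟩).app a q),
            (G.obj ⟨WalkingPair.right⟩).map f ((s.π.app ⟨WalkingPair.right⟩).app a q))
        exact Prod.ext (NatTrans.naturality_apply (s.π.app ⟨WalkingPair.left⟩) f q)
          (NatTrans.naturality_apply (s.π.app ⟨WalkingPair.right⟩) f q) }
  fac s := by
    rintro ⟨j⟩
    cases j <;> (apply NatTrans.ext; ext a q; rfl)
  uniq s m h := by
    apply NatTrans.ext; funext a; apply ConcreteCategory.hom_ext; intro q
    exact Prod.ext ((NatTrans.comp_app_apply m _ a q).symm.trans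
        (ConcreteCategory.congr_hom (NatTrans.congr_app (h ⟨WalkingPair.left⟩) a) q))
      ((NatTrans.comp_app_apply m _ a q).symm.trans
        (ConcreteCategory.congr_hom (NatTrans.congr_app (h ⟨WalkingPair.right⟩) a) q))

/-- Pointwise equalizer of a parallel-pair diagram. -/
def eqP (G : WalkingParallelPair ⥤ (A ⥤ Type u)) : A ⥤ Type u where
  obj a := { x : (G.obj WalkingParallelPair.zero).obj a //
    (G.map WalkingParallelPairHom.left).app a x
      = (G.map WalkingParallelPairHom.right).app a x }
  map {a a'} φ := ↾fun p => ⟨(G.obj WalkingParallelPair.zero).map φ p.1, by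
    rw [NatTrans.naturality_apply (G.map WalkingParallelPairHom.left) φ p.1, p.2,
      ← NatTrans.naturality_apply]⟩
  map_id a := by
    apply ConcreteCategory.hom_ext; intro p; apply Subtype.ext
    exact ConcreteCategory.congr_hom ((G.obj WalkingParallelPair.zero).map_id a) p.1
  map_comp f g := by
    apply ConcreteCategory.hom_ext; intro p; apply Subtype.ext
    exact ConcreteCategory.congr_hom ((G.obj WalkingParallelPair.zero).map_comp f g) p.1

def eqι (G : WalkingParallelPair ⥤ (A ⥤ Type u)) : eqP G ⟶ G.obj WalkingParallelPair.zero :=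
  { app := fun a => ↾fun p => p.1, naturality := fun _ _ _ => rfl }

lemma eqι_cond (G : WalkingParallelPair ⥤ (A ⥤ Type u)) :
    eqι G ≫ G.map WalkingParallelPairHom.left = eqι G ≫ G.map WalkingParallelPairHom.right := by
  apply NatTrans.ext; ext a p; exact p.2

/-- Limit cone over a parallel-pair diagram. -/
def eqCone (G : WalkingParallelPair ⥤ (A ⥤ Type u)) : Cone G where
  pt := eqP G
  π := { app := fun j => match j with
           | WalkingParallelPair.zero => eqι G
           | WalkingParallelPair.one => eqι G ≫ G.map WalkingParallelPairHom.left
         naturality := by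
           rintro _ _ (_ | _ | _)
           · simp
           · simpa using eqι_cond G
           · simp }

def eqIsLimit (G : WalkingParallelPair ⥤ (A ⥤ Type u)) : IsLimit (eqCone G) where
  lift s :=
    { app := fun a => ↾fun q => ⟨(s.π.app WalkingParallelPair.zero).app a q, by
        have h1 := ConcreteCategory.congr_hom (NatTrans.congr_app (s.w WalkingParallelPairHom.left) a) q
        have h2 := ConcreteCategory.congr_hom (NatTrans.congr_app (s.w WalkingParallelPairHom.right) a) q
        exact h1.trans h2.symm⟩
      naturality := fun a a' φ => by
        apply ConcreteCategory.hom_ext; intro q; apply Subtype.ext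
        exact ConcreteCategory.congr_hom ((s.π.app WalkingParallelPair.zero).naturality φ) q }
  fac s j := by
    cases j
    · apply NatTrans.ext; ext a q; rfl
    · apply NatTrans.ext; ext a q
      exact ConcreteCategory.congr_hom (NatTrans.congr_app (s.w WalkingParallelPairHom.left) a) q
  uniq s m h := by
    apply NatTrans.ext; funext a; apply ConcreteCategory.hom_ext; intro q; apply Subtype.ext
    exact ConcreteCategory.congr_hom (NatTrans.congr_app (h WalkingParallelPair.zero) a) q

end Cones
section Pres

open CategoryTheory.Limits

variable {C D : Type u} [SmallCategory C] [SmallCategory D] (H : Dist C D)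
variable (K : GrothendieckTopology D)

lemma preservesLimit_of_comparison {P : Type} [Category P] (G : P ⥤ (Cᵒᵖ ⥤ Type u))
    [PreservesLimitsOfShape P (presheafToSheaf K (Type u))]
    {c : Cone G} (hc : IsLimit c) {c' : Cone (G ⋙ L0 H)} (hc' : IsLimit c')
    (ψ : (L0 H).obj c.pt ⟶ c'.pt)
    (hψ : ∀ j, ψ ≫ c'.π.app j = (L0 H).map (c.π.app j))
    (hW : K.W ψ) :
    PreservesLimit G (L0 H ⋙ presheafToSheaf K (Type u)) := by
  apply preservesLimit_of_preserves_limit_cone hc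
  have h2 : IsLimit ((presheafToSheaf K (Type u)).mapCone c') := isLimitOfPreserves _ hc'
  have h3 : IsIso ((presheafToSheaf K (Type u)).map ψ) := (K.W_iff ψ).1 hW
  refine IsLimit.ofIsoLimit h2
    (Cones.ext (asIso ((presheafToSheaf K (Type u)).map ψ)).symm ?_)
  intro j
  dsimp
  rw [IsIso.eq_inv_comp, ← Functor.map_comp, hψ j]

/-- Comparison map for the empty diagram. -/
def psiEmpty : (L0 H).obj (unitP Cᵒᵖ) ⟶ unitP Dᵒᵖ where
  app := fun _ => ↾fun _ => PUnit.unit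
  naturality := fun _ _ _ => rfl

lemma W_psiEmpty (hfl : KFlat K H) : K.W (psiEmpty H) := by
  rw [K.W_iff_isLocallyBijective]
  constructor
  · constructor
    intro dop s t _
    induction s using Quot.ind with
    | _ a =>
    induction t using Quot.ind with
    | _ b =>
    apply equalizerSieve_mem_of_relSieve H K
    refine K.superset_covering ?_ (hfl.spans a.h b.h)
    rintro d' v ⟨c'', u, u', h'', e1, e2⟩
    exact ⟨c'', u, u', h'', e1, e2, rfl⟩
  · constructor
    intro d s
    refine K.superset_covering ?_ (hfl.nonempty d)
    rintro d' v ⟨c0, ⟨h0⟩⟩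
    exact ⟨mkL H ⟨c0, h0, PUnit.unit⟩, rfl⟩

lemma preservesEmpty (hfl : KFlat K H) :
    PreservesLimitsOfShape (Discrete PEmpty.{1}) (L0 H ⋙ presheafToSheaf K (Type u)) := by
  constructor
  intro G
  refine preservesLimit_of_comparison H K G (emptyIsLimit G) (emptyIsLimit (G ⋙ L0 H))
    (psiEmpty H) (fun j => j.as.elim) (W_psiEmpty H K hfl)

end Pres
section PairPres

open CategoryTheory.Limits

variable {C D : Type u} [SmallCategory C] [SmallCategory D] (H : Dist C D)
variable (K : GrothendieckTopology D)

lemma map3 (X : Cᵒᵖ ⥤ Type u) {c₁ c₂ c₃ c₄ : C} (t : c₄ ⟶ c₃) (w : c₃ ⟶ c₂) (U : c₂ ⟶ c₁)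
    (z : X.obj (op c₁)) :
    X.map (t ≫ w ≫ U).op z = X.map t.op (X.map w.op (X.map U.op z)) := by
  rw [op_comp, op_comp, FunctorToTypes.map_comp_apply, FunctorToTypes.map_comp_apply]

variable (G : Discrete WalkingPair ⥤ (Cᵒᵖ ⥤ Type u))

/-- Comparison map for binary products. -/
def psiPair : (L0 H).obj (pairCone G).pt ⟶ (pairCone (G ⋙ L0 H)).pt where
  app := fun dop => ↾fun s => (((L0 H).map (prodFst _ _)).app dop s,
    ((L0 H).map (prodSnd _ _)).app dop s)
  naturality := fun dop dop' φ => by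
    ext s
    induction s using Quot.ind with
    | _ e => rfl

lemma W_psiPair (hfl : KFlat K H) : K.W (psiPair H G) := by
  rw [K.W_iff_isLocallyBijective]
  constructor
  · constructor
    intro dop s t hst
    induction s using Quot.ind with
    | _ a =>
    induction t using Quot.ind with
    | _ b =>
    have hx : mkL H ⟨a.c, a.h, a.x.1⟩ = mkL H ⟨b.c, b.h, b.x.1⟩ := congrArg Prod.fst hst
    have hy : mkL H ⟨a.c, a.h, a.x.2⟩ = mkL H ⟨b.c, b.h, b.x.2⟩ := congrArg Prod.snd hst
    have S1 := relSieve_mem_of_eq H K hfl hx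
    have S2 := relSieve_mem_of_eq H K hfl hy
    refine K.transitive (K.intersection_covering S1 S2) _ ?_
    rintro d' v ⟨⟨c₁, u₁, u₁', h₁, a1, a2, a3⟩, ⟨c₂, u₂, u₂', h₂, b1, b2, b3⟩⟩
    have hstart : hmap H (𝟙 d') u₁ h₁ = hmap H (𝟙 d') u₂ h₂ := by
      rw [show hmap H (𝟙 d') u₁ h₁ = hmap H v (𝟙 a.c) a.h from a1,
          show hmap H (𝟙 d') u₂ h₂ = hmap H v (𝟙 a.c) a.h from b1]
    refine K.transitive (spanSieve_mem H K hfl u₁ u₂ h₁ h₂ hstart) _ ?_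
    rintro d'' v' ⟨c₅, w, w', h₅, hww, l1, l2⟩
    have heq2 : hmap H (𝟙 d'') (w ≫ u₁') h₅ = hmap H (𝟙 d'') (w' ≫ u₂') h₅ := by
      rw [← hmap_rr, l1, hmap_lr, show hmap H (𝟙 d') u₁' h₁ = hmap H v (𝟙 b.c) b.h from a2,
          ← hmap_rr, l2, hmap_lr, show hmap H (𝟙 d') u₂' h₂ = hmap H v (𝟙 b.c) b.h from b2]
    refine K.superset_covering ?_ (hfl.equalizes _ _ h₅ heq2)
    rintro d₃ v'' ⟨c₆, tt, h₆, ht, hh⟩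
    show ((L0 H).obj (pairCone G).pt).map ((v'' ≫ v') ≫ v).op (mkL H a)
      = ((L0 H).obj (pairCone G).pt).map ((v'' ≫ v') ≫ v).op (mkL H b)
    have legA : hmap H (𝟙 d₃) (tt ≫ w ≫ u₁) h₆ = hmap H ((v'' ≫ v') ≫ v) (𝟙 a.c) a.h := by
      rw [← hmap_rr, ← hh, hmap_lr, ← hmap_rr, l1, hmap_lr,
        show hmap H (𝟙 d') u₁ h₁ = hmap H v (𝟙 a.c) a.h from a1, hmap_ll, hmap_ll]
    have legB : hmap H (𝟙 d₃) (tt ≫ w ≫ u₁') h₆ = hmap H ((v'' ≫ v') ≫ v) (𝟙 b.c) b.h := by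
      rw [← hmap_rr, ← hh, hmap_lr, ← hmap_rr, l1, hmap_lr,
        show hmap H (𝟙 d') u₁' h₁ = hmap H v (𝟙 b.c) b.h from a2, hmap_ll, hmap_ll]
    have legX : (G.obj ⟨WalkingPair.left⟩).map (tt ≫ w ≫ u₁).op a.x.1
        = (G.obj ⟨WalkingPair.left⟩).map (tt ≫ w ≫ u₁').op b.x.1 := by
      rw [map3, map3, show (G.obj ⟨WalkingPair.left⟩).map u₁.op a.x.1
        = (G.obj ⟨WalkingPair.left⟩).map u₁'.op b.x.1 from a3]
    have legY : (G.obj ⟨WalkingPair.right⟩).map (tt ≫ w ≫ u₁).op a.x.2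
        = (G.obj ⟨WalkingPair.right⟩).map (tt ≫ w ≫ u₁').op b.x.2 := by
      have e4 : tt ≫ w ≫ u₁ = tt ≫ w' ≫ u₂ := by rw [hww]
      rw [e4, ht, map3, map3, show (G.obj ⟨WalkingPair.right⟩).map u₂.op a.x.2
        = (G.obj ⟨WalkingPair.right⟩).map u₂'.op b.x.2 from b3]
    refine resQ_eq_of_relSieve H ⟨c₆, tt ≫ w ≫ u₁, tt ≫ w ≫ u₁', h₆, ?_, ?_, ?_⟩
    · exact legA
    · exact legB
    · exact Prod.ext legX legY
  · constructor
    intro d s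
    obtain ⟨s1, s2⟩ := s
    induction s1 using Quot.ind with
    | _ a =>
    induction s2 using Quot.ind with
    | _ b =>
    refine K.superset_covering ?_ (hfl.spans a.h b.h)
    rintro d' v ⟨c'', u, u', h'', e1, e2⟩
    refine ⟨mkL H ⟨c'', h'', ((G.obj ⟨WalkingPair.left⟩).map u.op a.x,
      (G.obj ⟨WalkingPair.right⟩).map u'.op b.x)⟩, ?_⟩
    have p1 : mkL H ⟨c'', h'', (G.obj ⟨WalkingPair.left⟩).map u.op a.x⟩
        = resQ H v (mkL H a) := by
      have hre : resElt H v a = ⟨a.c, hmap H (𝟙 d') u h'', a.x⟩ := by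
        simp [resElt, ← e1]
      show _ = mkL H (resElt H v a)
      rw [hre]
      exact (Quot.sound (CoendRel.mk u h'' a.x)).symm
    have p2 : mkL H ⟨c'', h'', (G.obj ⟨WalkingPair.right⟩).map u'.op b.x⟩
        = resQ H v (mkL H b) := by
      have hre : resElt H v b = ⟨b.c, hmap H (𝟙 d') u' h'', b.x⟩ := by
        simp [resElt, ← e2]
      show _ = mkL H (resElt H v b)
      rw [hre]
      exact (Quot.sound (CoendRel.mk u' h'' b.x)).symm
    exact Prod.ext p1 p2

lemma preservesPair (hfl : KFlat K H) :
    PreservesLimitsOfShape (Discrete WalkingPair) (L0 H ⋙ presheafToSheaf K (Type u)) := by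
  constructor
  intro G
  refine preservesLimit_of_comparison H K G (pairIsLimit G) (pairIsLimit (G ⋙ L0 H))
    (psiPair H G) ?_ (W_psiPair H K G hfl)
  rintro ⟨j⟩
  cases j
  · apply NatTrans.ext; ext dop s
    induction s using Quot.ind with
    | _ e => rfl
  · apply NatTrans.ext; ext dop s
    induction s using Quot.ind with
    | _ e => rfl

end PairPres
section EqPres

open CategoryTheory.Limits

variable {C D : Type u} [SmallCategory C] [SmallCategory D] (H : Dist C D)
variable (K : GrothendieckTopology D)
variable (G : WalkingParallelPair ⥤ (Cᵒᵖ ⥤ Type u))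

/-- Comparison map for equalizers. -/
def psiEq : (L0 H).obj (eqCone G).pt ⟶ (eqCone (G ⋙ L0 H)).pt where
  app := fun dop => ↾Quot.lift
    (fun e => ⟨mkL H ⟨e.c, e.h, e.x.1⟩,
      congrArg (fun z => mkL H ⟨e.c, e.h, z⟩) e.x.2⟩)
    (by
      rintro a b ⟨u, h, p⟩
      apply Subtype.ext
      exact Quot.sound (CoendRel.mk u h p.1))
  naturality := fun dop dop' φ => by
    ext s
    induction s using Quot.ind with
    | _ e => exact Subtype.ext rfl

lemma W_psiEq (hfl : KFlat K H) : K.W (psiEq H G) := by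
  rw [K.W_iff_isLocallyBijective]
  constructor
  · constructor
    intro dop s t hst
    induction s using Quot.ind with
    | _ a =>
    induction t using Quot.ind with
    | _ b =>
    have hx : mkL H ⟨a.c, a.h, a.x.1⟩ = mkL H ⟨b.c, b.h, b.x.1⟩ :=
      congrArg Subtype.val hst
    apply equalizerSieve_mem_of_relSieve H K
    refine K.superset_covering ?_ (relSieve_mem_of_eq H K hfl hx)
    rintro d' v ⟨c'', u, u', h'', e1, e2, e3⟩
    exact ⟨c'', u, u', h'', e1, e2, Subtype.ext e3⟩
  · constructor
    intro d s
    obtain ⟨s0, hs⟩ := s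
    induction s0 using Quot.ind with
    | _ e =>
    have hs' : mkL H ⟨e.c, e.h, (G.map WalkingParallelPairHom.left).app (op e.c) e.x⟩
        = mkL H ⟨e.c, e.h, (G.map WalkingParallelPairHom.right).app (op e.c) e.x⟩ := hs
    refine K.transitive (relSieve_mem_of_eq H K hfl hs') _ ?_
    rintro d' v ⟨c'', u, u', h'', e1, e2, e3⟩
    replace e3 : (G.obj WalkingParallelPair.one).map u.op
          ((G.map WalkingParallelPairHom.left).app (op e.c) e.x)
        = (G.obj WalkingParallelPair.one).map u'.op
          ((G.map WalkingParallelPairHom.right).app (op e.c) e.x) := e3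
    refine K.superset_covering ?_ (hfl.equalizes u u' h'' (e1.trans e2.symm))
    rintro d'' w ⟨c₃, t, h₃, ht, hh⟩
    have hcond : (G.map WalkingParallelPairHom.left).app (op c₃)
          ((G.obj WalkingParallelPair.zero).map (t ≫ u).op e.x)
        = (G.map WalkingParallelPairHom.right).app (op c₃)
          ((G.obj WalkingParallelPair.zero).map (t ≫ u).op e.x) := by
      rw [NatTrans.naturality_apply (G.map WalkingParallelPairHom.left),
        NatTrans.naturality_apply (G.map WalkingParallelPairHom.right),
        op_comp, FunctorToTypes.map_comp_apply, e3, ← FunctorToTypes.map_comp_apply,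
        ← op_comp, ← op_comp, ← ht]
    refine ⟨mkL H ⟨c₃, h₃, ⟨(G.obj WalkingParallelPair.zero).map (t ≫ u).op e.x,
      hcond⟩⟩, ?_⟩
    apply Subtype.ext
    show mkL H ⟨c₃, h₃, (G.obj WalkingParallelPair.zero).map (t ≫ u).op e.x⟩
      = resQ H (w ≫ v) (mkL H e)
    have hre : resElt H (w ≫ v) e
        = ⟨e.c, hmap H (𝟙 d'') (t ≫ u) h₃, e.x⟩ := by
      have heh : hmap H (w ≫ v) (𝟙 e.c) e.h = hmap H (𝟙 d'') (t ≫ u) h₃ := by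
        rw [← hmap_ll, show hmap H v (𝟙 e.c) e.h = hmap H (𝟙 d') u h'' from e1.symm,
          ← hmap_lr, show hmap H w (𝟙 c'') h'' = hmap H (𝟙 d'') t h₃ from hh, hmap_rr]
      simp [resElt, heh]
    show _ = mkL H (resElt H (w ≫ v) e)
    rw [hre]
    exact (Quot.sound (CoendRel.mk (t ≫ u) h₃ e.x)).symm

lemma preservesEq (hfl : KFlat K H) :
    PreservesLimitsOfShape WalkingParallelPair (L0 H ⋙ presheafToSheaf K (Type u)) := by
  constructor
  intro G
  refine preservesLimit_of_comparison H K G (eqIsLimit G) (eqIsLimit (G ⋙ L0 H))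
    (psiEq H G) ?_ (W_psiEq H K G hfl)
  intro j
  cases j
  · apply NatTrans.ext; ext dop s
    induction s using Quot.ind with
    | _ e => rfl
  · apply NatTrans.ext; ext dop s
    induction s using Quot.ind with
    | _ e => rfl

lemma preservesFiniteLimits_L0_comp (hfl : KFlat K H) :
    PreservesFiniteLimits (L0 H ⋙ presheafToSheaf K (Type u)) := by
  have i1 := preservesEmpty H K hfl
  have i2 := preservesPair H K hfl
  have i3 := preservesEq H K hfl
  have i4 : PreservesFiniteProducts (L0 H ⋙ presheafToSheaf K (Type u)) :=
    PreservesFiniteProducts.of_preserves_binary_and_terminal _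
  exact preservesFiniteLimits_of_preservesEqualizers_and_finiteProducts _

end EqPres
section Main

variable {C D : Type u} [SmallCategory C] [SmallCategory D] (H : Dist C D)
variable (J : GrothendieckTopology C) (K : GrothendieckTopology D)

lemma W_functorInclusion {c : C} (S : Sieve c) (hS : S ∈ J c) : J.W S.functorInclusion := by
  haveI : Presheaf.IsLocallyInjective J S.functorInclusion :=
    Presheaf.isLocallyInjective_of_injective J _ (fun _ _ _ hxy => Subtype.ext hxy)
  haveI : Presheaf.IsLocallySurjective J S.functorInclusion := by
    constructor
    intro c₀ f
    refine J.superset_covering ?_ (J.pullback_stable f hS)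
    intro c₁ w hw
    exact ⟨⟨w ≫ f, hw⟩, rfl⟩
  exact J.W_of_isLocallyBijective _

lemma isSheaf_radj (hfl : KFlat K H) (hcd : CoverDistributing J K H) (Y : Sheaf K (Type u)) :
    Presheaf.IsSheaf J ((Presheaf.restrictedULiftYoneda.{u, u, u, u, u+1} (classify H)).obj
      ((sheafToPresheaf K (Type u)).obj Y)) := by
  rw [isSheaf_iff_isSheaf_of_type]
  intro c S hS
  rw [Presieve.isSheafFor_iff_yonedaSheafCondition]
  intro f
  let L' := lext H ⋙ presheafToSheaf K (Type u)
  let adjB := (Presheaf.uliftYonedaAdjunction.{u, u, u, u, u+1} (lext H)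
    (lextUnitU H)).comp (sheafificationAdjunction K (Type u))
  have hIso : IsIso (L'.map S.functorInclusion) :=
    (K.W_iff _).1 (W_lext_map H J K hfl hcd _ (W_functorInclusion J S hS))
  let e1 := adjB.homEquiv S.functor Y
  let e2 := adjB.homEquiv (yoneda.obj c) Y
  let φ₀ : L'.obj S.functor ⟶ Y := e1.symm f
  refine ⟨e2 (inv (L'.map S.functorInclusion) ≫ φ₀), ?_, ?_⟩
  · show S.functorInclusion ≫ e2 (inv (L'.map S.functorInclusion) ≫ φ₀) = f
    rw [show S.functorInclusion ≫ e2 (inv (L'.map S.functorInclusion) ≫ φ₀)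
        = e1 (L'.map S.functorInclusion ≫ inv (L'.map S.functorInclusion) ≫ φ₀) from
      (adjB.homEquiv_naturality_left S.functorInclusion _).symm,
      IsIso.hom_inv_id_assoc]
    exact e1.apply_symm_apply f
  · intro g hg
    have h1 : L'.map S.functorInclusion ≫ e2.symm g = φ₀ := by
      show _ = e1.symm f
      rw [← adjB.homEquiv_naturality_left_symm, hg]
    have h2 : e2.symm g = inv (L'.map S.functorInclusion) ≫ φ₀ := by
      rw [IsIso.eq_inv_comp]
      exact h1
    rw [← h2, Equiv.apply_symm_apply]

/-- The right adjoint `Sh(H)_*`. -/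
noncomputable def Gfun (hfl : KFlat K H) (hcd : CoverDistributing J K H) :
    Sheaf K (Type u) ⥤ Sheaf J (Type u) :=
  ObjectProperty.lift _ (sheafToPresheaf K (Type u) ⋙
    Presheaf.restrictedULiftYoneda.{u, u, u, u, u+1} (classify H)) (fun Y => isSheaf_radj H J K hfl hcd Y)

end Main
/-- A distributor of sites `H : (C,J) ⇸ (D,K)` induces a geometric morphism
`Sh(D,K) → Sh(C,J)`: the composite `a_K ∘ lext_H` inverts `J`-local isomorphisms, hence
factorizes through `a_J` via a left exact left adjoint `Sh(H)^* : Sh(C,J) ⥤ Sh(D,K)`. -/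
theorem distributorOfSites_induces_geometricMorphism {C D : Type u} [SmallCategory C]
    [SmallCategory D] (J : GrothendieckTopology C) (K : GrothendieckTopology D)
    (H : Dist C D) (hfl : KFlat K H) (hcd : CoverDistributing J K H) :
    (∀ ⦃X Y : Cᵒᵖ ⥤ Type u⦄ (g : X ⟶ Y), IsIso ((presheafToSheaf J (Type u)).map g) →
        IsIso ((lext H ⋙ presheafToSheaf K (Type u)).map g)) ∧
      ∃ F : Sheaf J (Type u) ⥤ Sheaf K (Type u),
        Nonempty (presheafToSheaf J (Type u) ⋙ F ≅ lext H ⋙ presheafToSheaf K (Type u)) ∧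
          PreservesFiniteLimits F ∧ F.IsLeftAdjoint := by
  have part1 : ∀ ⦃X Y : Cᵒᵖ ⥤ Type u⦄ (g : X ⟶ Y),
      IsIso ((presheafToSheaf J (Type u)).map g) →
      IsIso ((lext H ⋙ presheafToSheaf K (Type u)).map g) := by
    intro X Y g hg
    exact (K.W_iff _).1 (W_lext_map H J K hfl hcd g ((J.W_iff g).2 hg))
  refine ⟨part1, sheafToPresheaf J (Type u) ⋙ lext H ⋙ presheafToSheaf K (Type u),
    ?_, ?_, ?_⟩
  · -- the factorization isomorphism
    have hiso : ∀ P : Cᵒᵖ ⥤ Type u, IsIso ((lext H ⋙ presheafToSheaf K (Type u)).map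
        ((sheafificationAdjunction J (Type u)).unit.app P)) := fun P =>
      (K.W_iff _).1 (W_lext_map H J K hfl hcd _
        (J.W_adj_unit_app (sheafificationAdjunction J (Type u)) P))
    refine ⟨(NatIso.ofComponents (F := lext H ⋙ presheafToSheaf K (Type u))
      (G := presheafToSheaf J (Type u) ⋙
        (sheafToPresheaf J (Type u) ⋙ lext H ⋙ presheafToSheaf K (Type u)))
      (fun P => @asIso _ _ _ _ _ (hiso P)) (fun {P Q} f => ?_)).symm⟩
    show (lext H ⋙ presheafToSheaf K (Type u)).map f ≫
        (lext H ⋙ presheafToSheaf K (Type u)).map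
          ((sheafificationAdjunction J (Type u)).unit.app Q) = _
    rw [← Functor.map_comp]
    show _ = (lext H ⋙ presheafToSheaf K (Type u)).map
        ((sheafificationAdjunction J (Type u)).unit.app P) ≫
      (lext H ⋙ presheafToSheaf K (Type u)).map
        ((presheafToSheaf J (Type u) ⋙ sheafToPresheaf J (Type u)).map f)
    rw [← Functor.map_comp]
    congr 1
    exact (sheafificationAdjunction J (Type u)).unit.naturality f
  · -- preservation of finite limits
    haveI := preservesFiniteLimits_L0_comp H K hfl
    haveI : PreservesFiniteLimits (lext H ⋙ presheafToSheaf K (Type u)) :=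
      preservesFiniteLimits_of_natIso
        (Functor.isoWhiskerRight (lextIsoL0 H).symm (presheafToSheaf K (Type u)))
    exact comp_preservesFiniteLimits _ _
  · -- existence of a right adjoint
    refine ⟨⟨Gfun H J K hfl hcd, ⟨?_⟩⟩⟩
    exact Adjunction.restrictFullyFaithful
      ((Presheaf.uliftYonedaAdjunction.{u, u, u, u, u+1} (lext H)
        (lextUnitU H)).comp
          (sheafificationAdjunction K (Type u)))
      (fullyFaithfulSheafToPresheaf J (Type u)) (Functor.FullyFaithful.id _)
      (Iso.refl _) (Iso.refl _)

end DistPaper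
end

section
/- The composite of two distributors of sites is a distributor of sites: if H : (C,J) ⇸ (D,K) and G : (D,K) ⇸ (B,L) are distributors of sites, then G ⊗ H is L-flat and cover-distributing from J to L, hence a distributor of sites (C,J) ⇸ (B,L); moreover the unit hom_C is a distributor of sites (C,J) ⇸ (C,J). -/
open CategoryTheory CategoryTheory.Limits Opposite

universe u

namespace DistPaper

variable {B C D : Type u} [SmallCategory B] [SmallCategory C] [SmallCategory D]

/-- Action of a distributor `G : D ⇸ B` on a pair of morphisms with opposite first leg. -/
def gmap (G : Dist D B) {bop bop' : Bᵒᵖ} {d d' : D} (β : bop ⟶ bop') (w : d ⟶ d') :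
    G.obj (bop, d) → G.obj (bop', d') :=
  G.map ((β, w) : (bop, d) ⟶ (bop', d'))

lemma gmap_gmap (G : Dist D B) {b b' b'' : Bᵒᵖ} {d d' d'' : D} (β : b ⟶ b') (β' : b' ⟶ b'')
    (w : d ⟶ d') (w' : d' ⟶ d'') (x : G.obj (b, d)) :
    gmap G β' w' (gmap G β w x) = gmap G (β ≫ β') (w ≫ w') x := by
  dsimp [gmap]
  rw [← FunctorToTypes.map_comp_apply]
  congr 1

lemma gmap_id (G : Dist D B) {b : Bᵒᵖ} {d : D} (x : G.obj (b, d)) :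
    gmap G (𝟙 b) (𝟙 d) x = x := by
  dsimp [gmap]
  exact G.map_id_apply (b, d) x

/-- The coend relation defining the tensor product of distributors. -/
def tensorRel (G : Dist D B) (H : Dist C D) (bop : Bᵒᵖ) (c : C) :
    (Σ d : D, H.obj (op d, c) × G.obj (bop, d)) →
      (Σ d : D, H.obj (op d, c) × G.obj (bop, d)) → Prop :=
  fun p q => ∃ w : p.1 ⟶ q.1,
    p.2.1 = hmap H w (𝟙 c) q.2.1 ∧ q.2.2 = gmap G (𝟙 bop) w p.2.2

/-- The composite (tensor product) of distributors,
`(G ⊗ H)(b, c) = ∫^d H(d, c) × G(b, d)`. -/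
def tensor (G : Dist D B) (H : Dist C D) : Dist C B where
  obj bc := Quot (tensorRel G H bc.1 bc.2)
  map {bc bc'} f := TypeCat.ofHom <| Quot.map
    (fun p => ⟨p.1, hmap H (𝟙 p.1) f.2 p.2.1, gmap G f.1 (𝟙 p.1) p.2.2⟩)
    (by
      rintro p q ⟨w, h1, h2⟩
      refine ⟨w, ?_, ?_⟩
      · calc hmap H (𝟙 p.1) f.2 p.2.1
            = hmap H (𝟙 p.1) f.2 (hmap H w (𝟙 bc.2) q.2.1) := by rw [h1]
          _ = hmap H (𝟙 p.1 ≫ w) (𝟙 bc.2 ≫ f.2) q.2.1 := by rw [hmap_hmap]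
          _ = hmap H (w ≫ 𝟙 q.1) (f.2 ≫ 𝟙 bc'.2) q.2.1 := by simp
          _ = hmap H w (𝟙 bc'.2) (hmap H (𝟙 q.1) f.2 q.2.1) := by rw [hmap_hmap]
      · calc gmap G f.1 (𝟙 q.1) q.2.2
            = gmap G f.1 (𝟙 q.1) (gmap G (𝟙 bc.1) w p.2.2) := by rw [h2]
          _ = gmap G (𝟙 bc.1 ≫ f.1) (w ≫ 𝟙 q.1) p.2.2 := by rw [gmap_gmap]
          _ = gmap G (f.1 ≫ 𝟙 bc'.1) (𝟙 p.1 ≫ w) p.2.2 := by simp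
          _ = gmap G (𝟙 bc'.1) w (gmap G f.1 (𝟙 p.1) p.2.2) := by rw [gmap_gmap])
  map_id := by
    rintro ⟨bop, c⟩
    ext q
    obtain ⟨p, rfl⟩ := Quot.exists_rep q
    dsimp
    refine congrArg (Quot.mk _) (congrArg (Sigma.mk p.1) ?_)
    rw [hmap_id H p.2.1, gmap_id G p.2.2]
  map_comp := by
    rintro ⟨b1, c1⟩ ⟨b2, c2⟩ ⟨b3, c3⟩ ⟨f1, f2⟩ ⟨g1, g2⟩
    ext q
    obtain ⟨p, rfl⟩ := Quot.exists_rep q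
    dsimp
    refine congrArg (Quot.mk _) (congrArg (Sigma.mk p.1) ?_)
    rw [hmap_hmap, gmap_gmap]
    simp


section Auxiliary

variable {B C D : Type u} [SmallCategory B] [SmallCategory C] [SmallCategory D]

lemma hmap_l (H : Dist C D) {d d' d'' : D} {c c' : C} (v : d' ⟶ d) (v' : d'' ⟶ d')
    (u : c ⟶ c') (x : H.obj (op d, c)) :
    hmap H v' (𝟙 c') (hmap H v u x) = hmap H (v' ≫ v) u x := by
  rw [hmap_hmap, Category.comp_id]

lemma tensor_mk_map (G : Dist D B) (H : Dist C D) {b b' : B} {c c' : C}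
    (v : b' ⟶ b) (u : c ⟶ c') (d : D) (h : H.obj (op d, c)) (g : G.obj (op b, d)) :
    hmap (tensor G H) v u (Quot.mk (tensorRel G H (op b) c) ⟨d, h, g⟩) =
      Quot.mk (tensorRel G H (op b') c') ⟨d, hmap H (𝟙 d) u h, hmap G v (𝟙 d) g⟩ :=
  rfl

lemma tensor_map_left (G : Dist D B) (H : Dist C D) {b b' : B} {c : C}
    (v : b' ⟶ b) (d : D) (h : H.obj (op d, c)) (g : G.obj (op b, d)) :
    hmap (tensor G H) v (𝟙 c) (Quot.mk (tensorRel G H (op b) c) ⟨d, h, g⟩) =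
      Quot.mk (tensorRel G H (op b') c) ⟨d, h, hmap G v (𝟙 d) g⟩ := by
  rw [tensor_mk_map, hmap_id]

lemma tensor_map_right (G : Dist D B) (H : Dist C D) {b : B} {c c' : C}
    (u : c ⟶ c') (d : D) (h : H.obj (op d, c)) (g : G.obj (op b, d)) :
    hmap (tensor G H) (𝟙 b) u (Quot.mk (tensorRel G H (op b) c) ⟨d, h, g⟩) =
      Quot.mk (tensorRel G H (op b) c') ⟨d, hmap H (𝟙 d) u h, g⟩ := by
  rw [tensor_mk_map, hmap_id]

lemma tensor_mk_eq (G : Dist D B) (H : Dist C D) {b : B} {c : C} {d₁ d₂ : D}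
    (w : d₁ ⟶ d₂) (h₁ : H.obj (op d₁, c)) (h₂ : H.obj (op d₂, c))
    (g₁ : G.obj (op b, d₁)) (g₂ : G.obj (op b, d₂))
    (hh : h₁ = hmap H w (𝟙 c) h₂) (hg : g₂ = hmap G (𝟙 b) w g₁) :
    Quot.mk (tensorRel G H (op b) c) ⟨d₁, h₁, g₁⟩ =
      Quot.mk (tensorRel G H (op b) c) ⟨d₂, h₂, g₂⟩ :=
  Quot.sound ⟨w, hh, hg⟩

/-- The sieve of morphisms over which two coend-related elements can be linked by a
single `G`-compatible span. -/
def linkSieve (G : Dist D B) (H : Dist C D) {b : B} {c : C}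
    (p q : Σ d : D, H.obj (op d, c) × G.obj (op b, d)) : Sieve b where
  arrows b' v := ∃ (e : D) (w₁ : e ⟶ p.1) (w₂ : e ⟶ q.1) (g₃ : G.obj (op b', e)),
    hmap G v (𝟙 p.1) p.2.2 = hmap G (𝟙 b') w₁ g₃ ∧
    hmap G v (𝟙 q.1) q.2.2 = hmap G (𝟙 b') w₂ g₃ ∧
    hmap H w₁ (𝟙 c) p.2.1 = hmap H w₂ (𝟙 c) q.2.1
  downward_closed := by
    rintro b' b'' v ⟨e, w₁, w₂, g₃, a1, a2, a3⟩ t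
    refine ⟨e, w₁, w₂, hmap G t (𝟙 e) g₃, ?_, ?_, a3⟩
    · calc hmap G (t ≫ v) (𝟙 p.1) p.2.2
          = hmap G t (𝟙 p.1) (hmap G v (𝟙 p.1) p.2.2) := by simp [hmap_hmap]
        _ = hmap G t (𝟙 p.1) (hmap G (𝟙 b') w₁ g₃) := by rw [a1]
        _ = hmap G (𝟙 b'') w₁ (hmap G t (𝟙 e) g₃) := by simp [hmap_hmap]
    · calc hmap G (t ≫ v) (𝟙 q.1) q.2.2
          = hmap G t (𝟙 q.1) (hmap G v (𝟙 q.1) q.2.2) := by simp [hmap_hmap]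
        _ = hmap G t (𝟙 q.1) (hmap G (𝟙 b') w₂ g₃) := by rw [a2]
        _ = hmap G (𝟙 b'') w₂ (hmap G t (𝟙 e) g₃) := by simp [hmap_hmap]

lemma linkSieve_mem (L : GrothendieckTopology B) (G : Dist D B) (H : Dist C D)
    (hGfl : KFlat L G) {b : B} {c : C}
    {p q : Σ d : D, H.obj (op d, c) × G.obj (op b, d)}
    (hpq : Relation.EqvGen (tensorRel G H (op b) c) p q) :
    linkSieve G H p q ∈ L b := by
  induction hpq with
  | rel p q hr =>
    obtain ⟨w, hh, hg⟩ := hr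
    have hg' : q.2.2 = hmap G (𝟙 b) w p.2.2 := hg
    refine L.superset_covering (fun b' v _ => ?_) (L.top_mem b)
    refine ⟨p.1, 𝟙 p.1, w, hmap G v (𝟙 p.1) p.2.2, (hmap_id G _).symm, ?_, ?_⟩
    · calc hmap G v (𝟙 q.1) q.2.2
          = hmap G v (𝟙 q.1) (hmap G (𝟙 b) w p.2.2) := by rw [hg']
        _ = hmap G (𝟙 b') w (hmap G v (𝟙 p.1) p.2.2) := by simp [hmap_hmap]
    · rw [hmap_id]; exact hh
  | refl p =>
    refine L.superset_covering (fun b' v _ => ?_) (L.top_mem b)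
    exact ⟨p.1, 𝟙 p.1, 𝟙 p.1, hmap G v (𝟙 p.1) p.2.2, (hmap_id G _).symm,
      (hmap_id G _).symm, rfl⟩
  | symm p q _ ih =>
    refine L.superset_covering ?_ ih
    rintro b' v ⟨e, w₁, w₂, g₃, a1, a2, a3⟩
    exact ⟨e, w₂, w₁, g₃, a2, a1, a3.symm⟩
  | trans p q r _ _ ih₁ ih₂ =>
    refine L.transitive (L.intersection_covering ih₁ ih₂) _ ?_
    rintro b' v hv
    rw [Sieve.inter_apply] at hv
    obtain ⟨⟨e₁, w₁, w₂, g₃, a1, a2, a3⟩, ⟨e₂, w₂', w₃', g₃', b1, b2, b3⟩⟩ := hv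
    refine L.transitive (hGfl.spans g₃ g₃') _ ?_
    rintro b'' t ⟨e₃, s, s', g₄, c1, c2⟩
    have heq : hmap G (𝟙 b'') (s ≫ w₂) g₄ = hmap G (𝟙 b'') (s' ≫ w₂') g₄ := by
      calc hmap G (𝟙 b'') (s ≫ w₂) g₄
          = hmap G (𝟙 b'') w₂ (hmap G (𝟙 b'') s g₄) := by simp [hmap_hmap]
        _ = hmap G (𝟙 b'') w₂ (hmap G t (𝟙 e₁) g₃) := by rw [c1]
        _ = hmap G t (𝟙 q.1) (hmap G (𝟙 b') w₂ g₃) := by simp [hmap_hmap]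
        _ = hmap G t (𝟙 q.1) (hmap G v (𝟙 q.1) q.2.2) := by rw [a2]
        _ = hmap G t (𝟙 q.1) (hmap G (𝟙 b') w₂' g₃') := by rw [b1]
        _ = hmap G (𝟙 b'') w₂' (hmap G t (𝟙 e₂) g₃') := by simp [hmap_hmap]
        _ = hmap G (𝟙 b'') w₂' (hmap G (𝟙 b'') s' g₄) := by rw [← c2]
        _ = hmap G (𝟙 b'') (s' ≫ w₂') g₄ := by simp [hmap_hmap]
    refine L.superset_covering ?_ (hGfl.equalizes _ _ g₄ heq)
    rintro b''' r' ⟨e₄, m, g₅, hm, hg⟩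
    rw [Sieve.pullback_apply, Sieve.pullback_apply]
    refine ⟨e₄, m ≫ s ≫ w₁, m ≫ s' ≫ w₃', g₅, ?_, ?_, ?_⟩
    · calc hmap G ((r' ≫ t) ≫ v) (𝟙 p.1) p.2.2
          = hmap G (r' ≫ t) (𝟙 p.1) (hmap G v (𝟙 p.1) p.2.2) := by simp [hmap_hmap]
        _ = hmap G (r' ≫ t) (𝟙 p.1) (hmap G (𝟙 b') w₁ g₃) := by rw [a1]
        _ = hmap G r' (𝟙 p.1) (hmap G (𝟙 b'') w₁ (hmap G t (𝟙 e₁) g₃)) := by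
            simp [hmap_hmap]
        _ = hmap G r' (𝟙 p.1) (hmap G (𝟙 b'') w₁ (hmap G (𝟙 b'') s g₄)) := by rw [c1]
        _ = hmap G (𝟙 b''') (s ≫ w₁) (hmap G r' (𝟙 e₃) g₄) := by simp [hmap_hmap]
        _ = hmap G (𝟙 b''') (s ≫ w₁) (hmap G (𝟙 b''') m g₅) := by rw [hg]
        _ = hmap G (𝟙 b''') (m ≫ s ≫ w₁) g₅ := by simp [hmap_hmap]
    · calc hmap G ((r' ≫ t) ≫ v) (𝟙 r.1) r.2.2
          = hmap G (r' ≫ t) (𝟙 r.1) (hmap G v (𝟙 r.1) r.2.2) := by simp [hmap_hmap]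
        _ = hmap G (r' ≫ t) (𝟙 r.1) (hmap G (𝟙 b') w₃' g₃') := by rw [b2]
        _ = hmap G r' (𝟙 r.1) (hmap G (𝟙 b'') w₃' (hmap G t (𝟙 e₂) g₃')) := by
            simp [hmap_hmap]
        _ = hmap G r' (𝟙 r.1) (hmap G (𝟙 b'') w₃' (hmap G (𝟙 b'') s' g₄)) := by rw [c2]
        _ = hmap G (𝟙 b''') (s' ≫ w₃') (hmap G r' (𝟙 e₃) g₄) := by simp [hmap_hmap]
        _ = hmap G (𝟙 b''') (s' ≫ w₃') (hmap G (𝟙 b''') m g₅) := by rw [hg]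
        _ = hmap G (𝟙 b''') (m ≫ s' ≫ w₃') g₅ := by simp [hmap_hmap]
    · calc hmap H (m ≫ s ≫ w₁) (𝟙 c) p.2.1
          = hmap H (m ≫ s) (𝟙 c) (hmap H w₁ (𝟙 c) p.2.1) := by simp [hmap_hmap]
        _ = hmap H (m ≫ s) (𝟙 c) (hmap H w₂ (𝟙 c) q.2.1) := by rw [a3]
        _ = hmap H (m ≫ s ≫ w₂) (𝟙 c) q.2.1 := by simp [hmap_hmap]
        _ = hmap H (m ≫ s' ≫ w₂') (𝟙 c) q.2.1 := by rw [hm]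
        _ = hmap H (m ≫ s') (𝟙 c) (hmap H w₂' (𝟙 c) q.2.1) := by simp [hmap_hmap]
        _ = hmap H (m ≫ s') (𝟙 c) (hmap H w₃' (𝟙 c) r.2.1) := by rw [b3]
        _ = hmap H (m ≫ s' ≫ w₃') (𝟙 c) r.2.1 := by simp [hmap_hmap]

lemma hmap_hom {c₁ c₂ c₃ c₄ : C} (v : c₂ ⟶ c₁) (u : c₃ ⟶ c₄)
    (x : (Functor.hom C).obj (op c₁, c₃)) :
    hmap (Functor.hom C) v u x = v ≫ x ≫ u :=
  rfl

end Auxiliary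

/-- Distributors of sites compose: if `H : (C,J) ⇸ (D,K)` and `G : (D,K) ⇸ (B,L)` are
distributors of sites then `G ⊗ H` is a distributor of sites `(C,J) ⇸ (B,L)`; moreover the
unit `hom_C` is a distributor of sites `(C,J) ⇸ (C,J)`. -/
theorem tensor_distributorOfSites {B C D : Type u} [SmallCategory B] [SmallCategory C]
    [SmallCategory D] (J : GrothendieckTopology C) (K : GrothendieckTopology D)
    (L : GrothendieckTopology B) (H : Dist C D) (G : Dist D B)
    (hHcd : CoverDistributing J K H) (hHfl : KFlat K H)
    (hGcd : CoverDistributing K L G) (hGfl : KFlat L G) :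
    (CoverDistributing J L (tensor G H) ∧ KFlat L (tensor G H)) ∧
      (CoverDistributing J J (Functor.hom C) ∧ KFlat J (Functor.hom C)) := by
  refine ⟨⟨?_, ?_, ?_, ?_⟩, ?_, ?_, ?_, ?_⟩
  · -- cover-distributing for the tensor
    intro b c x S hS
    obtain ⟨⟨d, h, g⟩, rfl⟩ := Quot.exists_rep x
    refine L.superset_covering ?_ (hGcd g (pullDist H h S) (hHcd h S hS))
    rintro b' v ⟨d', w, g', ⟨c', s, h', hs, hh⟩, hgg⟩
    refine ⟨c', s, Quot.mk _ ⟨d', h', g'⟩, hs, ?_⟩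
    rw [tensor_map_left, tensor_map_right]
    exact (tensor_mk_eq G H w _ _ _ _ hh.symm hgg).symm
  · -- nonemptiness
    intro b
    refine L.transitive (hGfl.nonempty b) _ ?_
    rintro b' v ⟨d, ⟨g⟩⟩
    refine L.superset_covering ?_ (hGcd g _ (hHfl.nonempty d))
    rintro b'' t ⟨d', w, g', ⟨c, ⟨h⟩⟩, -⟩
    rw [Sieve.pullback_apply]
    exact ⟨c, ⟨Quot.mk _ ⟨d', h, g'⟩⟩⟩
  · -- spans
    intro b c c' x x'
    obtain ⟨⟨d₁, h₁, g₁⟩, rfl⟩ := Quot.exists_rep x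
    obtain ⟨⟨d₂, h₂, g₂⟩, rfl⟩ := Quot.exists_rep x'
    refine L.transitive (hGfl.spans g₁ g₂) _ ?_
    rintro b' v ⟨d₃, w₁, w₂, g₃, e1, e2⟩
    refine L.superset_covering ?_
      (hGcd g₃ _ (hHfl.spans (hmap H w₁ (𝟙 c) h₁) (hmap H w₂ (𝟙 c') h₂)))
    rintro b'' t ⟨d₄, n, g₄, ⟨c'', s₁, s₂, h₄, f1, f2⟩, f3⟩
    rw [Sieve.pullback_apply]
    refine ⟨c'', s₁, s₂, Quot.mk _ ⟨d₄, h₄, g₄⟩, ?_, ?_⟩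
    · rw [tensor_map_right, tensor_map_left]
      refine tensor_mk_eq G H (n ≫ w₁) _ _ _ _ ?_ ?_
      · calc hmap H (𝟙 d₄) s₁ h₄
            = hmap H n (𝟙 c) (hmap H w₁ (𝟙 c) h₁) := f1
          _ = hmap H (n ≫ w₁) (𝟙 c) h₁ := by simp [hmap_hmap]
      · calc hmap G (t ≫ v) (𝟙 d₁) g₁
            = hmap G t (𝟙 d₁) (hmap G v (𝟙 d₁) g₁) := by simp [hmap_hmap]
          _ = hmap G t (𝟙 d₁) (hmap G (𝟙 b') w₁ g₃) := by rw [← e1]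
          _ = hmap G (𝟙 b'') w₁ (hmap G t (𝟙 d₃) g₃) := by simp [hmap_hmap]
          _ = hmap G (𝟙 b'') w₁ (hmap G (𝟙 b'') n g₄) := by rw [f3]
          _ = hmap G (𝟙 b'') (n ≫ w₁) g₄ := by simp [hmap_hmap]
    · rw [tensor_map_right, tensor_map_left]
      refine tensor_mk_eq G H (n ≫ w₂) _ _ _ _ ?_ ?_
      · calc hmap H (𝟙 d₄) s₂ h₄
            = hmap H n (𝟙 c') (hmap H w₂ (𝟙 c') h₂) := f2
          _ = hmap H (n ≫ w₂) (𝟙 c') h₂ := by simp [hmap_hmap]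
      · calc hmap G (t ≫ v) (𝟙 d₂) g₂
            = hmap G t (𝟙 d₂) (hmap G v (𝟙 d₂) g₂) := by simp [hmap_hmap]
          _ = hmap G t (𝟙 d₂) (hmap G (𝟙 b') w₂ g₃) := by rw [← e2]
          _ = hmap G (𝟙 b'') w₂ (hmap G t (𝟙 d₃) g₃) := by simp [hmap_hmap]
          _ = hmap G (𝟙 b'') w₂ (hmap G (𝟙 b'') n g₄) := by rw [f3]
          _ = hmap G (𝟙 b'') (n ≫ w₂) g₄ := by simp [hmap_hmap]
  · -- equalization
    intro b c c' u u' x hx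
    obtain ⟨⟨d, h, g⟩, rfl⟩ := Quot.exists_rep x
    rw [tensor_map_right, tensor_map_right] at hx
    have hchain := Quot.eqvGen_exact hx
    refine L.transitive (linkSieve_mem L G H hGfl hchain) _ ?_
    rintro b' v ⟨e, w₁, w₂, g₃, a1, a2, a3⟩
    dsimp only at a1 a2 a3
    have heq12 : hmap G (𝟙 b') w₁ g₃ = hmap G (𝟙 b') w₂ g₃ := a1.symm.trans a2
    refine L.transitive (hGfl.equalizes w₁ w₂ g₃ heq12) _ ?_
    rintro b'' t ⟨e', m, g₄, hm, hg4⟩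
    have hkey : hmap H (𝟙 e') u (hmap H (m ≫ w₁) (𝟙 c') h) =
        hmap H (𝟙 e') u' (hmap H (m ≫ w₁) (𝟙 c') h) := by
      calc hmap H (𝟙 e') u (hmap H (m ≫ w₁) (𝟙 c') h)
          = hmap H m (𝟙 c) (hmap H w₁ (𝟙 c) (hmap H (𝟙 d) u h)) := by simp [hmap_hmap]
        _ = hmap H m (𝟙 c) (hmap H w₂ (𝟙 c) (hmap H (𝟙 d) u' h)) := by rw [a3]
        _ = hmap H (m ≫ w₂) u' h := by simp [hmap_hmap]
        _ = hmap H (m ≫ w₁) u' h := by rw [hm]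
        _ = hmap H (𝟙 e') u' (hmap H (m ≫ w₁) (𝟙 c') h) := by simp [hmap_hmap]
    refine L.superset_covering ?_ (hGcd g₄ _ (hHfl.equalizes u u' _ hkey))
    rintro b''' r ⟨e'', n, g₅, ⟨c'', w', h'', hw', hh''⟩, hg5⟩
    rw [Sieve.pullback_apply, Sieve.pullback_apply]
    refine ⟨c'', w', Quot.mk _ ⟨e'', h'', g₅⟩, hw', ?_⟩
    rw [tensor_map_left, tensor_map_right]
    refine (tensor_mk_eq G H (n ≫ m ≫ w₁) _ _ _ _ ?_ ?_).symm
    · calc hmap H (𝟙 e'') w' h''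
          = hmap H n (𝟙 c') (hmap H (m ≫ w₁) (𝟙 c') h) := hh''.symm
        _ = hmap H (n ≫ m ≫ w₁) (𝟙 c') h := by simp [hmap_hmap]
    · calc hmap G ((r ≫ t) ≫ v) (𝟙 d) g
          = hmap G (r ≫ t) (𝟙 d) (hmap G v (𝟙 d) g) := by simp [hmap_hmap]
        _ = hmap G (r ≫ t) (𝟙 d) (hmap G (𝟙 b') w₁ g₃) := by rw [a1]
        _ = hmap G r (𝟙 d) (hmap G (𝟙 b'') w₁ (hmap G t (𝟙 e) g₃)) := by
            simp [hmap_hmap]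
        _ = hmap G r (𝟙 d) (hmap G (𝟙 b'') w₁ (hmap G (𝟙 b'') m g₄)) := by rw [hg4]
        _ = hmap G (𝟙 b''') (m ≫ w₁) (hmap G r (𝟙 e') g₄) := by simp [hmap_hmap]
        _ = hmap G (𝟙 b''') (m ≫ w₁) (hmap G (𝟙 b''') n g₅) := by rw [hg5]
        _ = hmap G (𝟙 b''') (n ≫ m ≫ w₁) g₅ := by simp [hmap_hmap]
  · -- hom is cover-distributing
    intro d c x S hS
    refine J.superset_covering ?_ (J.pullback_stable x hS)
    rintro d' v hv
    refine ⟨d', v ≫ x, 𝟙 d', hv, ?_⟩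
    exact ((fun f : d ⟶ c => (by simp : v ≫ f ≫ 𝟙 c = 𝟙 d' ≫ 𝟙 d' ≫ v ≫ f)) x).trans
      (hmap_hom (𝟙 d') (v ≫ x) (𝟙 d')).symm
  · -- hom is nonempty-flat
    intro d
    exact J.superset_covering (fun Y f _ => ⟨Y, ⟨𝟙 Y⟩⟩) (J.top_mem d)
  · -- hom spans
    intro d c c' x x'
    refine J.superset_covering (fun Y v _ => ⟨Y, v ≫ x, v ≫ x', 𝟙 Y, ?_, ?_⟩)
      (J.top_mem d)
    · exact (hmap_hom (𝟙 Y) (v ≫ x) (𝟙 Y)).trans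
        (((fun f : d ⟶ c => (by simp : 𝟙 Y ≫ 𝟙 Y ≫ v ≫ f = v ≫ f ≫ 𝟙 c)) x).trans
          (hmap_hom v (𝟙 c) x).symm)
    · exact (hmap_hom (𝟙 Y) (v ≫ x') (𝟙 Y)).trans
        (((fun f : d ⟶ c' => (by simp : 𝟙 Y ≫ 𝟙 Y ≫ v ≫ f = v ≫ f ≫ 𝟙 c')) x').trans
          (hmap_hom v (𝟙 c') x').symm)
  · -- hom equalizes
    intro d c c' u u' x hx
    have hx' : x ≫ u = x ≫ u' := by simp [hmap_hom] at hx; exact hx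
    refine J.superset_covering (fun Y v _ => ⟨Y, v ≫ x, 𝟙 Y, ?_, ?_⟩) (J.top_mem d)
    · exact (Category.assoc _ _ _).trans ((congrArg (v ≫ ·) hx').trans (Category.assoc _ _ _).symm)
    · exact ((fun f : d ⟶ c' => (by simp : v ≫ f ≫ 𝟙 c' = 𝟙 Y ≫ 𝟙 Y ≫ v ≫ f)) x).trans
        (hmap_hom (𝟙 Y) (v ≫ x) (𝟙 Y)).symm


end DistPaper
end
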